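/- arXiv:1908.03327 — 6 statements merged into one kernel-verified Lean document; each statement's English description precedes it below -/
import Mathlib

section
/- Let k be a field, (A,d) a commutative associative differential k-algebra with unit whose ring of constants ker(d) equals k, C a differential subfield of A containing k, X a set, (u_x)_{x∈X} a family in C, and S a noncommutative series with coefficients in A solving d(S) = (Σ_{x∈X} u_x x)·S with ⟨S,1⟩ = 1. Assume that for every f ∈ C and every finitely supported family (α_x)_{x∈X} of elements of k, the equality d(f) = Σ_{x∈X} α_x u_x forces α_x = 0 for all x. Then the full family (⟨S,w⟩)_{w∈X*} of coefficients of S, indexed by all words over X, is linearly independent over C. -/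
/-- A family `v : ι → A` is linearly independent over a set of coefficients `C ⊆ A`. -/
def LinIndepOver {A : Type*} [CommRing A] (C : Set A) {ι : Type*} (v : ι → A) : Prop :=
  ∀ g : ι →₀ A, (∀ i, g i ∈ C) → (g.sum fun i c => c * v i) = 0 → g = 0

/-- The key induction: any relation supported on words of length ≤ L, with at most n
words of length L in the support, is trivial. -/
theorem key_triangle
    (k : Type*) [Field k] (A : Type*) [CommRing A] [Algebra k A]
    (d : Derivation k A A)
    (hker : ∀ a : A, d a = 0 ↔ ∃ c : k, algebraMap k A c = a)
    (C : Subalgebra k A)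
    (hCfield : ∀ c ∈ C, c ≠ 0 → ∃ c' ∈ C, c * c' = 1)
    (hCd : ∀ c ∈ C, d c ∈ C)
    (X : Type*) (u : X → A) (hu : ∀ x, u x ∈ C)
    (S : List X → A)
    (hS1 : S [] = 1)
    (hSd : ∀ (x : X) (w : List X), d (S (x :: w)) = u x * S w)
    (hiii : ∀ f ∈ C, ∀ α : X →₀ k,
      d f = (α.sum fun x c => algebraMap k A c * u x) → α = 0)
    (hnt : (1:A) ≠ 0) :
    ∀ L n : ℕ, ∀ s : Finset (List X), ∀ g : List X → A,
      (∀ w ∈ s, g w ∈ C) → (∀ w ∈ s, w.length ≤ L) →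
      ((s.filter fun w => w.length = L).card ≤ n) →
      (∑ w ∈ s, g w * S w) = 0 → ∀ w ∈ s, g w = 0 := by
  classical
  have hinj : Function.Injective (algebraMap k A) := by
    haveI : Nontrivial A := ⟨1, 0, hnt⟩
    exact (algebraMap k A).injective
  intro L
  induction L with
  | zero =>
    intro n s g hgC hlen _ hsum w hw
    have hwnil : w = [] := List.length_eq_zero_iff.mp (Nat.le_zero.mp (hlen w hw))
    have hs : s = {([] : List X)} := by
      apply Finset.Subset.antisymm
      · intro v hv
        simp [List.length_eq_zero_iff.mp (Nat.le_zero.mp (hlen v hv))]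
      · intro v hv
        simp only [Finset.mem_singleton] at hv
        subst hv
        rw [← hwnil]; exact hw
    rw [hs, Finset.sum_singleton, hS1, mul_one] at hsum
    rw [hwnil]; exact hsum
  | succ L ihL =>
    intro n
    induction n with
    | zero =>
      intro s g hgC hlen hcard hsum
      have hfil : (s.filter fun w => w.length = L + 1) = ∅ :=
        Finset.card_eq_zero.mp (Nat.le_zero.mp hcard)
      have hlen' : ∀ w ∈ s, w.length ≤ L := by
        intro w hw
        have h1 : w.length ≤ L + 1 := hlen w hw
        have h2 : w.length ≠ L + 1 := by
          intro h
          have : w ∈ (s.filter fun w => w.length = L + 1) := Finset.mem_filter.mpr ⟨hw, h⟩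
          rw [hfil] at this; exact absurd this (Finset.notMem_empty w)
        omega
      exact ihL s.card s g hgC hlen' (Finset.card_filter_le _ _) hsum
    | succ n ihn =>
      intro s g hgC hlen hcard hsum
      by_cases hT : (s.filter fun w => w.length = L + 1) = ∅
      · exact ihn s g hgC hlen (by rw [hT]; simp) hsum
      · -- pick a top word w0
        obtain ⟨w0, hw0T⟩ := Finset.nonempty_of_ne_empty hT
        have hw0s : w0 ∈ s := (Finset.mem_filter.mp hw0T).1
        have hw0len : w0.length = L + 1 := (Finset.mem_filter.mp hw0T).2
        by_cases hg0 : g w0 = 0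
        · -- remove w0 from s and use the inner induction hypothesis
          have hsum' : ∑ w ∈ s.erase w0, g w * S w = 0 := by
            rw [Finset.sum_erase s (by rw [hg0, zero_mul])]; exact hsum
          have hcard' : ((s.erase w0).filter fun w => w.length = L + 1).card ≤ n := by
            rw [Finset.filter_erase]
            have := Finset.card_erase_of_mem hw0T
            omega
          have hres := ihn (s.erase w0) g (fun w hw => hgC w (Finset.mem_of_mem_erase hw))
            (fun w hw => hlen w (Finset.mem_of_mem_erase hw)) hcard' hsum'
          intro w hw
          by_cases hww : w = w0
          · rw [hww]; exact hg0
          · exact hres w (Finset.mem_erase.mpr ⟨hww, hw⟩)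
        · -- nontrivial coefficient at a top word: derive a contradiction
          exfalso
          obtain ⟨c', hc'C, hc'⟩ := hCfield (g w0) (hgC w0 hw0s) hg0
          have hc'1 : c' * g w0 = 1 := by rw [mul_comm]; exact hc'
          -- the normalized relation
          have hsum1 : ∑ w ∈ s, (c' * g w) * S w = 0 := by
            have : ∑ w ∈ s, (c' * g w) * S w = c' * ∑ w ∈ s, g w * S w := by
              rw [Finset.mul_sum]; exact Finset.sum_congr rfl (fun w _ => by ring)
            rw [this, hsum, mul_zero]
          -- the "shift" part of the derived relation
          have hFex : ∃ F : List X → List X → A,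
              (∀ w, F [] w = 0) ∧ (∀ x w' w, F (x :: w') w =
                if w' = w then (c' * g (x :: w')) * u x else 0) := by
            refine ⟨fun v w => match v with
              | [] => 0
              | x :: w' => if w' = w then (c' * g (x :: w')) * u x else 0,
              fun _ => rfl, fun _ _ _ => rfl⟩
          obtain ⟨F, F_nil, F_cons⟩ := hFex
          obtain ⟨h, hhdef⟩ : ∃ h : List X → A, ∀ w, h w =
              (if w ∈ s then d (c' * g w) else 0) + ∑ v ∈ s, F v w :=
            ⟨_, fun _ => rfl⟩
          set s' : Finset (List X) := s ∪ s.image List.tail with hs'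
          have hsub : s ⊆ s' := Finset.subset_union_left
          -- top shift terms vanish
          have claim1 : ∀ w : List X, w.length = L + 1 → (∑ v ∈ s, F v w) = 0 := by
            intro w hwlen
            apply Finset.sum_eq_zero
            intro v hv
            match v with
            | [] => exact F_nil w
            | x :: w' =>
              rw [F_cons]
              have hne : w' ≠ w := by
                intro hweq
                have hlv := hlen (x :: w') hv
                rw [List.length_cons, hweq, hwlen] at hlv
                omega
              rw [if_neg hne]
          -- the derived relation holds
          have hrel' : ∑ w ∈ s', h w * S w = 0 := by
            have e1 : ∑ w ∈ s', (if w ∈ s then d (c' * g w) else 0) * S w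
                = ∑ w ∈ s, d (c' * g w) * S w := by
              rw [← Finset.sum_subset hsub]
              · exact Finset.sum_congr rfl (fun w hw => by simp [hw])
              · intro w _ hw; simp [hw]
            have e2 : ∑ w ∈ s', (∑ v ∈ s, F v w) * S w
                = ∑ v ∈ s, (c' * g v) * d (S v) := by
              have swap : ∑ w ∈ s', (∑ v ∈ s, F v w) * S w
                  = ∑ v ∈ s, ∑ w ∈ s', F v w * S w :=
                calc ∑ w ∈ s', (∑ v ∈ s, F v w) * S w
                    = ∑ w ∈ s', ∑ v ∈ s, F v w * S w :=
                      Finset.sum_congr rfl (fun w _ => Finset.sum_mul _ _ _)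
                  _ = ∑ v ∈ s, ∑ w ∈ s', F v w * S w := Finset.sum_comm
              rw [swap]
              apply Finset.sum_congr rfl
              intro v hv
              match v with
              | [] =>
                simp only [F_nil, zero_mul, Finset.sum_const_zero]
                rw [hS1, Derivation.map_one_eq_zero, mul_zero]
              | x :: w' =>
                have hw's' : w' ∈ s' := by
                  apply Finset.mem_union_right
                  exact Finset.mem_image.mpr ⟨x :: w', hv, rfl⟩
                rw [Finset.sum_eq_single_of_mem w' hw's'
                  (fun b _ hb => by rw [F_cons, if_neg (fun h => hb h.symm), zero_mul]),
                  F_cons, if_pos rfl, hSd]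
                ring
            have e3 : ∑ w ∈ s', h w * S w
                = ∑ w ∈ s, d (c' * g w) * S w + ∑ v ∈ s, (c' * g v) * d (S v) := by
              rw [← e1, ← e2, ← Finset.sum_add_distrib]
              exact Finset.sum_congr rfl (fun w _ => by rw [hhdef w, add_mul])
            rw [e3]
            have key : ∑ w ∈ s, (d (c' * g w) * S w + (c' * g w) * d (S w)) = 0 := by
              have hd0 : d (∑ w ∈ s, (c' * g w) * S w) = 0 := by rw [hsum1, map_zero]
              rw [map_sum] at hd0
              rw [← hd0]
              apply Finset.sum_congr rfl
              intro w _
              conv_rhs => rw [Derivation.leibniz]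
              simp only [smul_eq_mul]
              ring
            rw [← key, Finset.sum_add_distrib]
          -- values of h lie in C
          have hC' : ∀ w ∈ s', h w ∈ C := by
            intro w _
            rw [hhdef w]
            apply add_mem
            · by_cases hws : w ∈ s
              · simp only [if_pos hws]
                exact hCd _ (mul_mem hc'C (hgC w hws))
              · simp only [if_neg hws]; exact zero_mem C
            · apply Subalgebra.sum_mem
              intro v hv
              match v with
              | [] => rw [F_nil]; exact zero_mem C
              | x :: w' =>
                rw [F_cons]
                by_cases hww : w' = w
                · simp only [if_pos hww]
                  exact mul_mem (mul_mem hc'C (hgC _ hv)) (hu x)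
                · simp only [if_neg hww]; exact zero_mem C
          -- lengths in s' are ≤ L + 1
          have hlen' : ∀ w ∈ s', w.length ≤ L + 1 := by
            intro w hw
            rcases Finset.mem_union.mp hw with hw | hw
            · exact hlen w hw
            · obtain ⟨v, hv, rfl⟩ := Finset.mem_image.mp hw
              have := hlen v hv
              have := (List.length_tail : (List.tail v).length = v.length - 1)
              omega
          -- h vanishes at w0
          have hhw0 : h w0 = 0 := by
            rw [hhdef w0, if_pos hw0s, claim1 w0 hw0len, hc'1,
              Derivation.map_one_eq_zero, add_zero]
          -- the filtered top set of s' equals that of s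
          have hfil' : (s'.filter fun w => w.length = L + 1)
              = (s.filter fun w => w.length = L + 1) := by
            rw [hs', Finset.filter_union]
            have : ((s.image List.tail).filter fun w => w.length = L + 1) = ∅ := by
              apply Finset.filter_eq_empty_iff.mpr
              intro w hw
              obtain ⟨v, hv, rfl⟩ := Finset.mem_image.mp hw
              have := hlen v hv
              have := (List.length_tail : (List.tail v).length = v.length - 1)
              omega
            rw [this, Finset.union_empty]
          have hw0s' : w0 ∈ s' := hsub hw0s
          -- apply the inner induction hypothesis to (s'.erase w0, h)
          have hcard'' : ((s'.erase w0).filter fun w => w.length = L + 1).card ≤ n := by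
            rw [Finset.filter_erase, hfil']
            have := Finset.card_erase_of_mem hw0T
            omega
          have hrel'' : ∑ w ∈ s'.erase w0, h w * S w = 0 := by
            rw [Finset.sum_erase s' (by rw [hhw0, zero_mul])]; exact hrel'
          have hzero : ∀ w ∈ s'.erase w0, h w = 0 :=
            ihn (s'.erase w0) h (fun w hw => hC' w (Finset.mem_of_mem_erase hw))
              (fun w hw => hlen' w (Finset.mem_of_mem_erase hw)) hcard'' hrel''
          have hzero' : ∀ w ∈ s', h w = 0 := by
            intro w hw
            by_cases hww : w = w0
            · rw [hww]; exact hhw0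
            · exact hzero w (Finset.mem_erase.mpr ⟨hww, hw⟩)
          -- coefficients of top words are constants
          have claim2 : ∀ w ∈ s, w.length = L + 1 → d (c' * g w) = 0 := by
            intro w hw hwlen
            have hz := hzero' w (hsub hw)
            rw [hhdef w, if_pos hw, claim1 w hwlen, add_zero] at hz
            exact hz
          -- decompose w0
          obtain ⟨x0, w1, rfl⟩ : ∃ x0 w1, w0 = x0 :: w1 := by
            cases w0 with
            | nil => simp at hw0len
            | cons a b => exact ⟨a, b, rfl⟩
          have hw1len : w1.length = L := by simpa using hw0len
          -- the finset of letters extending w1 into s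
          have hgex : ∃ hfun : List X → Finset X,
              (hfun [] = ∅) ∧ (∀ x w', hfun (x :: w') =
                if w' = w1 then {x} else ∅) := by
            refine ⟨fun v => match v with
              | [] => ∅
              | x :: w' => if w' = w1 then {x} else ∅, rfl, fun _ _ => rfl⟩
          obtain ⟨hfun, hfun_nil, hfun_cons⟩ := hgex
          set E : Finset X := s.biUnion hfun with hE
          have hEmem : ∀ x : X, x ∈ E ↔ (x :: w1) ∈ s := by
            intro x
            rw [hE, Finset.mem_biUnion]
            constructor
            · rintro ⟨v, hv, hx⟩
              match v with
              | [] => rw [hfun_nil] at hx; exact absurd hx (Finset.notMem_empty x)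
              | y :: w' =>
                rw [hfun_cons] at hx
                by_cases hww : w' = w1
                · rw [if_pos hww] at hx
                  have : x = y := Finset.mem_singleton.mp hx
                  subst this; subst hww; exact hv
                · rw [if_neg hww] at hx; exact absurd hx (Finset.notMem_empty x)
            · intro hmem
              exact ⟨x :: w1, hmem, by rw [hfun_cons, if_pos rfl]; exact Finset.mem_singleton_self x⟩
          -- the normalized coefficient function on letters
          obtain ⟨G, hGdef⟩ : ∃ G : X → A, ∀ x, G x =
              if (x :: w1) ∈ s then c' * g (x :: w1) else 0 := ⟨_, fun _ => rfl⟩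
          have hdG : ∀ x : X, d (G x) = 0 := by
            intro x
            rw [hGdef x]
            by_cases hxs : (x :: w1) ∈ s
            · rw [if_pos hxs]
              exact claim2 (x :: w1) hxs (by simp [hw1len])
            · rw [if_neg hxs]; exact map_zero d
          have hspec : ∀ x : X, ∃ cc : k, algebraMap k A cc = G x :=
            fun x => (hker (G x)).mp (hdG x)
          set c : X → k := fun x => (hspec x).choose with hc
          have hcspec : ∀ x, algebraMap k A (c x) = G x := fun x => (hspec x).choose_spec
          have hcout : ∀ x : X, x ∉ E → c x = 0 := by
            intro x hx
            apply hinj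
            rw [hcspec x, map_zero, hGdef x,
              if_neg (fun hmem => hx ((hEmem x).mpr hmem))]
          set α : X →₀ k := Finsupp.onFinset E (fun x => -(c x))
            (fun x hx => by
              by_contra hxE
              exact hx (show -(c x) = 0 by rw [hcout x hxE, neg_zero])) with hα
          have hαapp : ∀ x, α x = -(c x) := fun x => rfl
          -- compute the shift sum at w1 via E
          have hdisj : (↑s : Set (List X)).PairwiseDisjoint hfun := by
            intro v₁ h₁ v₂ h₂ hne
            simp only [Function.onFun]
            rw [Finset.disjoint_left]
            intro x hx1 hx2
            apply hne
            match v₁ with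
            | [] => rw [hfun_nil] at hx1; exact absurd hx1 (Finset.notMem_empty x)
            | y₁ :: t₁ =>
              match v₂ with
              | [] => rw [hfun_nil] at hx2; exact absurd hx2 (Finset.notMem_empty x)
              | y₂ :: t₂ =>
                rw [hfun_cons] at hx1 hx2
                by_cases ht₁ : t₁ = w1
                · by_cases ht₂ : t₂ = w1
                  · rw [if_pos ht₁] at hx1; rw [if_pos ht₂] at hx2
                    have e1 : x = y₁ := Finset.mem_singleton.mp hx1
                    have e2 : x = y₂ := Finset.mem_singleton.mp hx2
                    rw [ht₁, ht₂, ← e1, ← e2]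
                  · rw [if_neg ht₂] at hx2; exact absurd hx2 (Finset.notMem_empty x)
                · rw [if_neg ht₁] at hx1; exact absurd hx1 (Finset.notMem_empty x)
          have hσ : ∑ v ∈ s, F v w1 = ∑ x ∈ E, G x * u x := by
            rw [hE, Finset.sum_biUnion hdisj]
            apply Finset.sum_congr rfl
            intro v hv
            match v with
            | [] => rw [hfun_nil, F_nil, Finset.sum_empty]
            | x :: w' =>
              rw [hfun_cons, F_cons]
              by_cases hww : w' = w1
              · subst hww
                rw [if_pos rfl, if_pos rfl, Finset.sum_singleton, hGdef x, if_pos hv]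
              · rw [if_neg hww, if_neg hww, Finset.sum_empty]
          -- w1 belongs to s'
          have hw1s' : w1 ∈ s' := by
            apply Finset.mem_union_right
            exact Finset.mem_image.mpr ⟨x0 :: w1, hw0s, rfl⟩
          -- set f and verify the hypothesis of (iii)
          set f : A := if w1 ∈ s then c' * g w1 else 0 with hf
          have hfC : f ∈ C := by
            rw [hf]
            by_cases hws : w1 ∈ s
            · simp only [if_pos hws]; exact mul_mem hc'C (hgC w1 hws)
            · simp only [if_neg hws]; exact zero_mem C
          have hdf : d f = α.sum fun x cc => algebraMap k A cc * u x := by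
            have hhw1 : h w1 = 0 := hzero' w1 hw1s'
            rw [hhdef w1] at hhw1
            have hdfval : d f + ∑ v ∈ s, F v w1 = 0 := by
              rw [hf]
              by_cases hws : w1 ∈ s
              · simp only [if_pos hws] at hhw1 ⊢; exact hhw1
              · simp only [if_neg hws] at hhw1 ⊢; rw [map_zero]; exact hhw1
            have hsum_eq : (α.sum fun x cc => algebraMap k A cc * u x)
                = ∑ x ∈ E, algebraMap k A (α x) * u x := by
              apply Finsupp.sum_of_support_subset
              · exact Finsupp.support_onFinset_subset
              · intro x _; rw [map_zero, zero_mul]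
            rw [hsum_eq]
            have : ∑ x ∈ E, algebraMap k A (α x) * u x = -∑ x ∈ E, G x * u x := by
              rw [← Finset.sum_neg_distrib]
              apply Finset.sum_congr rfl
              intro x _
              rw [hαapp, map_neg, hcspec, neg_mul]
            rw [this, ← hσ]
            exact eq_neg_of_add_eq_zero_left hdfval
          have hα0 : α = 0 := hiii f hfC α hdf
          -- contradiction at x0
          have : α x0 = 0 := by rw [hα0]; rfl
          rw [hαapp, neg_eq_zero] at this
          have hG0 : G x0 = 0 := by rw [← hcspec x0, this, map_zero]
          rw [hGdef x0, if_pos hw0s, hc'1] at hG0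
          exact hnt hG0

/-- (iii) ⟹ (i) in the basic triangle theorem. -/
theorem stmt2
    (k : Type*) [Field k] (A : Type*) [CommRing A] [Algebra k A]
    (d : Derivation k A A)
    (hker : ∀ a : A, d a = 0 ↔ ∃ c : k, algebraMap k A c = a)
    (C : Subalgebra k A)
    (hCfield : ∀ c ∈ C, c ≠ 0 → ∃ c' ∈ C, c * c' = 1)
    (hCd : ∀ c ∈ C, d c ∈ C)
    (X : Type*) (u : X → A) (hu : ∀ x, u x ∈ C)
    (S : List X → A)
    (hS1 : S [] = 1)
    (hSd : ∀ (x : X) (w : List X), d (S (x :: w)) = u x * S w)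
    -- (iii): d(f) = ∑ α_x u_x with α finitely supported in k forces α = 0
    (hiii : ∀ f ∈ C, ∀ α : X →₀ k,
      d f = (α.sum fun x c => algebraMap k A c * u x) → α = 0) :
    -- (i): the full family of coefficients of S is free over C
    LinIndepOver (C : Set A) S := by
  classical
  intro g hgC hsum
  by_cases hnt : (1:A) = 0
  · ext w
    calc g w = g w * 1 := (mul_one _).symm
    _ = g w * 0 := by rw [hnt]
    _ = 0 := mul_zero _
  · have hzero := key_triangle k A d hker C hCfield hCd X u hu S hS1 hSd hiii hnt
      (g.support.sup fun w => w.length) g.support.card g.support g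
      (fun w _ => hgC w)
      (fun w hw => Finset.le_sup (f := fun w => w.length) hw)
      (Finset.card_filter_le _ _)
      hsum
    ext w
    by_cases hw : w ∈ g.support
    · exact hzero w hw
    · exact Finsupp.notMem_support_iff.mp hw
end

section
/- Let B be a Banach algebra with unit e and G a closed subgroup of the group B^× of invertible elements. If u ∈ L(G), i.e. u = γ'(0) for some path γ : I → G on an open interval I containing 0 with γ differentiable at 0 and γ(0) = e, then the one-parameter group t ↦ exp(t·u) takes all its values in G, i.e. exp(t·u) ∈ G for every real t. -/
open Filter Topology

-- norm of powers of (1+z)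
lemma aux_norm_one_add_pow {B : Type*} [NormedRing B] (z : B) :
    ∀ i : ℕ, ‖(1 + z) ^ i‖ ≤ ‖(1 : B)‖ * (1 + ‖z‖) ^ i := by
  intro i
  induction i with
  | zero => simp
  | succ i ih =>
    have h1 : (1 + z) ^ (i+1) = (1+z)^i + z * (1+z)^i := by
      rw [pow_succ', add_mul, one_mul]
    calc ‖(1 + z) ^ (i+1)‖ ≤ ‖(1+z)^i‖ + ‖z * (1+z)^i‖ := by
          rw [h1]; exact norm_add_le _ _
      _ ≤ ‖(1+z)^i‖ + ‖z‖ * ‖(1+z)^i‖ := by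
          gcongr; exact norm_mul_le _ _
      _ = (1 + ‖z‖) * ‖(1+z)^i‖ := by ring
      _ ≤ (1 + ‖z‖) * (‖(1 : B)‖ * (1 + ‖z‖) ^ i) := by
          gcongr
      _ = ‖(1 : B)‖ * (1 + ‖z‖) ^ (i+1) := by ring

-- telescoping identity
lemma aux_pow_sub_pow {B : Type*} [Ring B] (x y : B) :
    ∀ n : ℕ, x ^ n - y ^ n = ∑ i ∈ Finset.range n, x ^ (n - 1 - i) * (x - y) * y ^ i := by
  intro n
  induction n with
  | zero => simp
  | succ n ih =>
    rw [Finset.sum_range_succ]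
    have h : ∀ i ∈ Finset.range n, x ^ (n + 1 - 1 - i) * (x - y) * y ^ i
        = x * (x ^ (n - 1 - i) * (x - y) * y ^ i) := by
      intro i hi
      rw [Finset.mem_range] at hi
      have : n + 1 - 1 - i = (n - 1 - i) + 1 := by omega
      rw [this, pow_succ']
      noncomm_ring
    rw [Finset.sum_congr rfl h, ← Finset.mul_sum, ← ih]
    have : n + 1 - 1 - n = 0 := by omega
    rw [this, pow_zero, one_mul, pow_succ' x, pow_succ' y]
    noncomm_ring

lemma aux_norm_pow_sub_pow {B : Type*} [NormedRing B] (x y : B) (K : ℝ) (n : ℕ)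
    (hx : ∀ i < n, ‖x ^ i‖ ≤ K) (hy : ∀ i < n, ‖y ^ i‖ ≤ K) :
    ‖x ^ n - y ^ n‖ ≤ n * (K * K) * ‖x - y‖ := by
  rcases Nat.eq_zero_or_pos n with rfl | hn
  · simp
  have hK : 0 ≤ K := le_trans (norm_nonneg _) (hx 0 hn)
  rw [aux_pow_sub_pow]
  calc ‖∑ i ∈ Finset.range n, x ^ (n - 1 - i) * (x - y) * y ^ i‖
      ≤ ∑ i ∈ Finset.range n, ‖x ^ (n - 1 - i) * (x - y) * y ^ i‖ := norm_sum_le _ _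
    _ ≤ ∑ i ∈ Finset.range n, K * K * ‖x - y‖ := by
        apply Finset.sum_le_sum
        intro i hi
        rw [Finset.mem_range] at hi
        calc ‖x ^ (n - 1 - i) * (x - y) * y ^ i‖
            ≤ ‖x ^ (n - 1 - i) * (x - y)‖ * ‖y ^ i‖ := norm_mul_le _ _
          _ ≤ ‖x ^ (n - 1 - i)‖ * ‖x - y‖ * ‖y ^ i‖ := by
              gcongr; exact norm_mul_le _ _
          _ ≤ K * ‖x - y‖ * K := by
              gcongr
              · exact hx _ (by omega)
              · exact hy _ hi
          _ = K * K * ‖x - y‖ := by ring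
    _ = n * (K * K) * ‖x - y‖ := by
        rw [Finset.sum_const, Finset.card_range]; push_cast; ring_nf

/-- The set of tangent vectors at the identity of `G ⊆ B`: derivatives at `0` of paths
drawn on `G`, defined on an open interval containing `0`, differentiable at `0`,
passing through the identity at `0`. -/
def tangentSet {B : Type*} [NormedRing B] [NormedAlgebra ℝ B] (G : Set B) : Set B :=
  {u : B | ∃ (a b : ℝ) (γ : ℝ → B), a < 0 ∧ 0 < b ∧
    (∀ t ∈ Set.Ioo a b, γ t ∈ G) ∧ γ 0 = 1 ∧ HasDerivAt γ u 0}

open Filter Topology in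
/-- If `u ∈ L(G)` then the one-parameter group `t ↦ exp(t·u)` is drawn on `G`. -/
theorem stmt6
    {B : Type*} [NormedRing B] [NormedAlgebra ℝ B] [CompleteSpace B]
    (G : Set B) (hGclosed : IsClosed G)
    (hGone : (1 : B) ∈ G)
    (hGmul : ∀ x ∈ G, ∀ y ∈ G, x * y ∈ G)
    (hGinv : ∀ x ∈ G, ∃ y ∈ G, x * y = 1 ∧ y * x = 1)
    (u : B) (hu : u ∈ tangentSet G) :
    ∀ t : ℝ, NormedSpace.exp (t • u) ∈ G := by
  intro t
  let +nondep : NormedAlgebra ℚ B := .restrictScalars ℚ ℝ B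
  obtain ⟨a, b, γ, ha, hb, hγG, hγ0, hγd⟩ := hu
  set E : ℝ → B := fun s => NormedSpace.exp (s • u) with hE
  have hEd : HasDerivAt E u 0 := by
    have h := hasDerivAt_exp_smul_const (𝕂 := ℝ) u (0 : ℝ)
    simpa [hE, NormedSpace.exp_zero] using h
  have hE0 : E 0 = 1 := by simp [hE, NormedSpace.exp_zero]
  -- little-o estimate for the difference of the two paths
  have hf : (fun s => γ s - E s) =o[𝓝 (0:ℝ)] (fun s : ℝ => s) := by
    have h := hasDerivAt_iff_isLittleO.mp (hγd.sub hEd)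
    simpa [hγ0, hE0] using h
  have hts : Tendsto (fun n : ℕ => t / (n : ℝ)) atTop (𝓝 0) :=
    tendsto_const_div_atTop_nhds_zero_nat t
  have hfo : (fun n : ℕ => γ (t / n) - E (t / n)) =o[atTop] (fun n : ℕ => t / (n : ℝ)) :=
    hf.comp_tendsto hts
  -- key : n * ‖γ(t/n) - E(t/n)‖ → 0
  have key : Tendsto (fun n : ℕ => (n : ℝ) * ‖γ (t / n) - E (t / n)‖) atTop (𝓝 0) := by
    rw [NormedAddCommGroup.tendsto_nhds_zero]
    intro ε hε
    have hc : (0:ℝ) < ε / (2 * (|t| + 1)) := by positivity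
    filter_upwards [hfo.def hc, eventually_ge_atTop 1] with n hn h1
    have hn0 : (0:ℝ) < n := by exact_mod_cast h1
    have h2 : (n:ℝ) * ‖γ (t/n) - E (t/n)‖ ≤ (n:ℝ) * (ε / (2 * (|t| + 1)) * ‖t / (n:ℝ)‖) := by
      gcongr
    have h3 : (n:ℝ) * (ε / (2 * (|t| + 1)) * ‖t / (n:ℝ)‖) = ε / (2 * (|t| + 1)) * |t| := by
      rw [Real.norm_eq_abs, abs_div, abs_of_pos hn0]
      field_simp
    have h4 : ε / (2 * (|t| + 1)) * |t| < ε := by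
      rw [div_mul_eq_mul_div, div_lt_iff₀ (by positivity)]
      nlinarith [abs_nonneg t]
    have h5 : (0:ℝ) ≤ (n:ℝ) * ‖γ (t/n) - E (t/n)‖ := by positivity
    rw [Real.norm_eq_abs, abs_of_nonneg h5]
    calc (n:ℝ) * ‖γ (t/n) - E (t/n)‖ ≤ ε / (2 * (|t| + 1)) * |t| := by rw [← h3]; exact h2
      _ < ε := h4
  -- bound on ‖γ s - 1‖
  have hγ1 : ∀ᶠ s in 𝓝 (0:ℝ), ‖γ s - 1‖ ≤ (‖u‖ + 1) * |s| := by
    have h := hasDerivAt_iff_isLittleO.mp hγd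
    simp only [hγ0, sub_zero] at h
    filter_upwards [h.def one_pos] with s hs
    have h1 : ‖γ s - 1‖ ≤ ‖γ s - 1 - s • u‖ + ‖s • u‖ := by
      calc ‖γ s - 1‖ = ‖(γ s - 1 - s • u) + s • u‖ := by rw [sub_add_cancel]
        _ ≤ ‖γ s - 1 - s • u‖ + ‖s • u‖ := norm_add_le _ _
    have h2 : ‖s • u‖ = |s| * ‖u‖ := by rw [norm_smul, Real.norm_eq_abs]
    rw [Real.norm_eq_abs] at hs
    calc ‖γ s - 1‖ ≤ ‖γ s - 1 - s • u‖ + ‖s • u‖ := h1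
      _ ≤ 1 * |s| + |s| * ‖u‖ := by rw [h2]; gcongr
      _ = (‖u‖ + 1) * |s| := by ring
  set c₀ : ℝ := (‖u‖ + 1) * |t| with hc₀
  have hc₀0 : 0 ≤ c₀ := by positivity
  set Kx : ℝ := ‖(1:B)‖ * Real.exp c₀ with hKx
  -- uniform bound on powers of γ (t/n)
  have evX : ∀ᶠ n : ℕ in atTop, ∀ i ≤ n, ‖(γ (t / n)) ^ i‖ ≤ Kx := by
    filter_upwards [hts.eventually hγ1, eventually_ge_atTop 1] with n hn h1
    intro i hi
    have hn0 : (0:ℝ) < n := by exact_mod_cast h1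
    have hz : ‖γ (t / n) - 1‖ ≤ c₀ / n := by
      have : (‖u‖ + 1) * |t / (n:ℝ)| = c₀ / n := by
        rw [abs_div, abs_of_pos hn0, hc₀]; ring
      rw [← this]; exact hn
    have hrw : γ (t / n) = 1 + (γ (t / n) - 1) := by rw [add_comm, sub_add_cancel]
    calc ‖(γ (t / n)) ^ i‖ = ‖(1 + (γ (t / n) - 1)) ^ i‖ := by rw [← hrw]
      _ ≤ ‖(1:B)‖ * (1 + ‖γ (t / n) - 1‖) ^ i := aux_norm_one_add_pow _ i
      _ ≤ ‖(1:B)‖ * (1 + c₀ / n) ^ i := by gcongr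
      _ ≤ ‖(1:B)‖ * (1 + c₀ / n) ^ n := by
          apply mul_le_mul_of_nonneg_left _ (norm_nonneg _)
          apply pow_le_pow_right₀ _ hi
          have : (0:ℝ) ≤ c₀ / n := by positivity
          linarith
      _ ≤ ‖(1:B)‖ * (Real.exp (c₀ / n)) ^ n := by
          apply mul_le_mul_of_nonneg_left _ (norm_nonneg _)
          apply pow_le_pow_left₀ (by positivity)
          linarith [Real.add_one_le_exp (c₀ / (n:ℝ))]
      _ = ‖(1:B)‖ * Real.exp ((n:ℝ) * (c₀ / n)) := by rw [Real.exp_nat_mul]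
      _ = Kx := by rw [hKx]; congr 2; field_simp
  -- bound on E over a compact interval
  have hEcont : Continuous E := by
    exact NormedSpace.exp_continuous.comp (continuous_id.smul continuous_const)
  obtain ⟨Ky, hKy⟩ : ∃ K, ∀ s ∈ Set.Icc (-|t|) |t|, ‖E s‖ ≤ K :=
    isCompact_Icc.exists_bound_of_continuousOn hEcont.continuousOn
  have evY : ∀ᶠ n : ℕ in atTop, ∀ i ≤ n, ‖(E (t / n)) ^ i‖ ≤ Ky := by
    filter_upwards [eventually_ge_atTop 1] with n h1
    intro i hi
    have hn0 : (0:ℝ) < n := by exact_mod_cast h1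
    have hpow : (E (t / n)) ^ i = E ((i : ℝ) * (t / n)) := by
      rw [hE]
      simp only
      rw [← NormedSpace.exp_nsmul, ← Nat.cast_smul_eq_nsmul ℝ, smul_smul]
    rw [hpow]
    apply hKy
    rw [Set.mem_Icc, ← abs_le]
    calc |(i:ℝ) * (t / n)| = (i:ℝ) * (|t| / n) := by
          rw [abs_mul, abs_div, abs_of_pos hn0, Nat.abs_cast]
      _ ≤ (n:ℝ) * (|t| / n) := by
          have hin : (i:ℝ) ≤ (n:ℝ) := by exact_mod_cast hi
          gcongr
      _ = |t| := by field_simp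
  set K : ℝ := max Kx Ky with hK
  -- the main estimate
  have hbound : ∀ᶠ n : ℕ in atTop,
      ‖(γ (t / n)) ^ n - NormedSpace.exp (t • u)‖
        ≤ K * K * ((n : ℝ) * ‖γ (t / n) - E (t / n)‖) := by
    filter_upwards [evX, evY, eventually_ge_atTop 1] with n hX hY h1
    have hn0 : (0:ℝ) < n := by exact_mod_cast h1
    have harg : ((n:ℝ) * (t / n)) • u = t • u := by
      congr 1
      field_simp
    have hexp : NormedSpace.exp (t • u) = (E (t / n)) ^ n := by
      rw [hE]
      simp only
      rw [← NormedSpace.exp_nsmul, ← Nat.cast_smul_eq_nsmul ℝ, smul_smul, harg]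
    rw [hexp]
    have h := aux_norm_pow_sub_pow (γ (t / n)) (E (t / n)) K n
      (fun i hi => le_trans (hX i hi.le) (le_max_left _ _))
      (fun i hi => le_trans (hY i hi.le) (le_max_right _ _))
    calc ‖(γ (t / n)) ^ n - (E (t / n)) ^ n‖
        ≤ (n:ℝ) * (K * K) * ‖γ (t / n) - E (t / n)‖ := h
      _ = K * K * ((n : ℝ) * ‖γ (t / n) - E (t / n)‖) := by ring
  -- convergence
  have hlim : Tendsto (fun n : ℕ => (γ (t / n)) ^ n) atTop (𝓝 (NormedSpace.exp (t • u))) := by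
    rw [tendsto_iff_norm_sub_tendsto_zero]
    apply squeeze_zero' (Eventually.of_forall fun n => norm_nonneg _) hbound
    simpa using key.const_mul (K * K)
  -- membership
  have hmem : ∀ᶠ n : ℕ in atTop, (γ (t / n)) ^ n ∈ G := by
    have hIoo : ∀ᶠ n : ℕ in atTop, t / (n:ℝ) ∈ Set.Ioo a b :=
      hts.eventually (isOpen_Ioo.eventually_mem ⟨ha, hb⟩)
    have hpowG : ∀ x ∈ G, ∀ m : ℕ, x ^ m ∈ G := by
      intro x hx m
      induction m with
      | zero => simpa using hGone
      | succ m ih => rw [pow_succ]; exact hGmul _ ih _ hx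
    filter_upwards [hIoo] with n hn
    exact hpowG _ (hγG _ hn) n
  exact hGclosed.mem_of_tendsto hlim hmem
end

section
/- Let B be a Banach algebra with unit e and G a closed subgroup of B^×. If u, v ∈ L(G), then u + v ∈ L(G). (A tangent path realizing u + v is t ↦ exp(t·u)·exp(t·v).) -/
/-- If `u, v ∈ L(G)` then `u + v ∈ L(G)`. -/
theorem stmt7
    {B : Type*} [NormedRing B] [NormedAlgebra ℝ B] [CompleteSpace B]
    (G : Set B) (hGclosed : IsClosed G)
    (hGone : (1 : B) ∈ G)
    (hGmul : ∀ x ∈ G, ∀ y ∈ G, x * y ∈ G)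
    (hGinv : ∀ x ∈ G, ∃ y ∈ G, x * y = 1 ∧ y * x = 1)
    (u v : B) (hu : u ∈ tangentSet G) (hv : v ∈ tangentSet G) :
    u + v ∈ tangentSet G := by
  obtain ⟨a₁, b₁, γ, ha₁, hb₁, hγG, hγ0, hγd⟩ := hu
  obtain ⟨a₂, b₂, δ, ha₂, hb₂, hδG, hδ0, hδd⟩ := hv
  refine ⟨max a₁ a₂, min b₁ b₂, fun t => γ t * δ t,
    max_lt ha₁ ha₂,
    lt_min hb₁ hb₂, ?_, by simp [hγ0, hδ0], ?_⟩
  · intro t ht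
    exact hGmul _ (hγG t ⟨lt_of_le_of_lt (le_max_left _ _) ht.1, ht.2.trans_le (min_le_left _ _)⟩)
      _ (hδG t ⟨lt_of_le_of_lt (le_max_right _ _) ht.1, ht.2.trans_le (min_le_right _ _)⟩)
  · have := hγd.mul hδd
    rwa [hγ0, hδ0, mul_one, one_mul] at this
end

section
/- Let B be a Banach algebra with unit e and G a closed subgroup of B^×. If u, v ∈ L(G), then the commutator [u,v] = uv − vu belongs to L(G). (A tangent path realizing [u,v] is γ(t) = exp(r(t)u)exp(r(t)v)exp(−r(t)u)exp(−r(t)v) with r(t) = √(2t) for t ≥ 0, extended by γ(t) = γ₁(−t)^{−1} for t ≤ 0.) -/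
open Filter Asymptotics Set Topology

/-- If `u, v ∈ L(G)` then the commutator `[u,v] = u*v - v*u` belongs to `L(G)`. -/
theorem stmt9
    {B : Type*} [NormedRing B] [NormedAlgebra ℝ B] [CompleteSpace B]
    (G : Set B) (hGclosed : IsClosed G)
    (hGone : (1 : B) ∈ G)
    (hGmul : ∀ x ∈ G, ∀ y ∈ G, x * y ∈ G)
    (hGinv : ∀ x ∈ G, ∃ y ∈ G, x * y = 1 ∧ y * x = 1)
    (u v : B) (hu : u ∈ tangentSet G) (hv : v ∈ tangentSet G) :
    u * v - v * u ∈ tangentSet G := by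
  obtain ⟨a₁, b₁, γ, ha₁, hb₁, hγG, hγ0, hγd⟩ := hu
  obtain ⟨a₂, b₂, η, ha₂, hb₂, hηG, hη0, hηd⟩ := hv
  set w : B := u * v - v * u with hw
  -- every element of G is a unit whose inverse lies in G
  have haux : ∀ x ∈ G, IsUnit x ∧ Ring.inverse x ∈ G := by
    intro x hx
    obtain ⟨y, hyG, h1, h2⟩ := hGinv x hx
    have hu' : IsUnit x := ⟨⟨x, y, h1, h2⟩, rfl⟩
    have hxy : Ring.inverse x = y := by
      calc Ring.inverse x = Ring.inverse x * (x * y) := by rw [h1, mul_one]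
        _ = Ring.inverse x * x * y := by rw [mul_assoc]
        _ = y := by rw [Ring.inverse_mul_cancel x hu', one_mul]
    exact ⟨hu', hxy ▸ hyG⟩
  have hsmulO : ∀ (g : ℝ → ℝ) (x : B), (fun r : ℝ => g r • x) =O[𝓝 0] g := by
    intro g x
    refine IsBigO.of_bound ‖x‖ (Filter.Eventually.of_forall fun r => ?_)
    rw [norm_smul]
    exact le_of_eq (mul_comm _ _)
  -- first order expansions
  have hE₁ : (fun r : ℝ => γ r - 1 - r • u) =o[𝓝 0] fun r => r := by
    have := hasDerivAt_iff_isLittleO.mp hγd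
    simpa [hγ0] using this
  have hE₂ : (fun r : ℝ => η r - 1 - r • v) =o[𝓝 0] fun r => r := by
    have := hasDerivAt_iff_isLittleO.mp hηd
    simpa [hη0] using this
  have hO₁ : (fun r : ℝ => γ r - 1) =O[𝓝 0] fun r => r := by
    have := hE₁.isBigO.add (hsmulO (fun r => r) u)
    simpa using this
  have hO₂ : (fun r : ℝ => η r - 1) =O[𝓝 0] fun r => r := by
    have := hE₂.isBigO.add (hsmulO (fun r => r) v)
    simpa using this
  -- the commutator difference
  have key : ∀ r : ℝ, γ r * η r - η r * γ r - r ^ 2 • w =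
      ((r • u) * (η r - 1 - r • v) + (γ r - 1 - r • u) * (η r - 1)) -
      ((r • v) * (γ r - 1 - r • u) + (η r - 1 - r • v) * (γ r - 1)) := by
    intro r
    simp only [hw, mul_sub, sub_mul, mul_one, one_mul, smul_mul_assoc, mul_smul_comm,
      smul_smul, smul_sub, sub_smul, pow_two]
    module
  have h1 : (fun r : ℝ => (r • u) * (η r - 1 - r • v)) =o[𝓝 0] fun r => r * r :=
    (hsmulO (fun r => r) u).mul_isLittleO hE₂
  have h2 : (fun r : ℝ => (γ r - 1 - r • u) * (η r - 1)) =o[𝓝 0] fun r => r * r :=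
    hE₁.mul_isBigO hO₂
  have h3 : (fun r : ℝ => (r • v) * (γ r - 1 - r • u)) =o[𝓝 0] fun r => r * r :=
    (hsmulO (fun r => r) v).mul_isLittleO hE₁
  have h4 : (fun r : ℝ => (η r - 1 - r • v) * (γ r - 1)) =o[𝓝 0] fun r => r * r :=
    hE₂.mul_isBigO hO₁
  have hP : (fun r : ℝ => γ r * η r - η r * γ r - r ^ 2 • w) =o[𝓝 0] fun r => r ^ 2 :=
    ((h1.add h2).sub (h3.add h4)).congr (fun r => (key r).symm) (fun r => (pow_two r).symm)
  -- continuity facts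
  have hγc : Tendsto γ (𝓝 0) (𝓝 1) := by
    have := hγd.continuousAt
    rwa [ContinuousAt, hγ0] at this
  have hηc : Tendsto η (𝓝 0) (𝓝 1) := by
    have := hηd.continuousAt
    rwa [ContinuousAt, hη0] at this
  have hinv : ∀ {φ : ℝ → B}, Tendsto φ (𝓝 0) (𝓝 1) →
      Tendsto (fun r => Ring.inverse (φ r)) (𝓝 0) (𝓝 1) := by
    intro φ h
    have h1 : ContinuousAt Ring.inverse ((1 : Bˣ) : B) := NormedRing.inverse_continuousAt 1
    have h2 := h1.tendsto.comp (by simpa using h)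
    rw [Units.val_one, Ring.inverse_one] at h2
    exact h2
  set f : ℝ → B := fun r => γ r * η r * Ring.inverse (γ r) * Ring.inverse (η r) with hfdef
  have hev : ∀ᶠ r in 𝓝 (0 : ℝ), γ r ∈ G ∧ η r ∈ G := by
    have h : Set.Ioo (max a₁ a₂) (min b₁ b₂) ∈ 𝓝 (0 : ℝ) :=
      Ioo_mem_nhds (max_lt ha₁ ha₂) (lt_min hb₁ hb₂)
    filter_upwards [h] with r hr
    exact ⟨hγG r ⟨(le_max_left a₁ a₂).trans_lt hr.1, hr.2.trans_le (min_le_left _ _)⟩,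
      hηG r ⟨(le_max_right a₁ a₂).trans_lt hr.1, hr.2.trans_le (min_le_right _ _)⟩⟩
  have hfeq : ∀ᶠ r in 𝓝 (0 : ℝ), f r - 1 =
      (γ r * η r - η r * γ r) * (Ring.inverse (γ r) * Ring.inverse (η r)) := by
    filter_upwards [hev] with r hr
    obtain ⟨hg1, hg2⟩ := hr
    have hu1 := (haux _ hg1).1
    have hu2 := (haux _ hg2).1
    have e1 : η r * γ r * (Ring.inverse (γ r) * Ring.inverse (η r)) = 1 := by
      rw [← mul_assoc, Ring.mul_inverse_cancel_right _ _ hu1, Ring.mul_inverse_cancel _ hu2]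
    rw [sub_mul, e1]
    have e2 : f r = γ r * η r * (Ring.inverse (γ r) * Ring.inverse (η r)) :=
      mul_assoc _ _ _
    rw [e2]
  have hR : Tendsto (fun r => Ring.inverse (γ r) * Ring.inverse (η r)) (𝓝 (0:ℝ)) (𝓝 1) := by
    simpa using (hinv hγc).mul (hinv hηc)
  have hf : (fun r : ℝ => f r - 1 - r ^ 2 • w) =o[𝓝 0] fun r => r ^ 2 := by
    have hRO : (fun r => Ring.inverse (γ r) * Ring.inverse (η r)) =O[𝓝 (0:ℝ)]
        (fun _ => (1 : ℝ)) := hR.isBigO_one ℝ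
    have p1 := hP.mul_isBigO hRO
    have hR1 : (fun r => Ring.inverse (γ r) * Ring.inverse (η r) - 1) =o[𝓝 (0:ℝ)]
        (fun _ => (1 : ℝ)) := by
      rw [isLittleO_one_iff]
      simpa using hR.sub (tendsto_const_nhds (x := (1 : B)))
    have p2 := (hsmulO (fun r => r ^ 2) w).mul_isLittleO hR1
    have hsum := p1.add p2
    refine hsum.congr' ?_ ?_
    · filter_upwards [hfeq] with r hr
      rw [hr]
      simp only [sub_mul, mul_sub, mul_one]
      abel
    · exact Filter.Eventually.of_forall fun r => by ring
  have hftend : Tendsto f (𝓝 (0:ℝ)) (𝓝 1) := by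
    have := ((hγc.mul hηc).mul (hinv hγc)).mul (hinv hηc)
    simpa using this
  have hfG : ∀ᶠ r in 𝓝 (0 : ℝ), f r ∈ G := by
    filter_upwards [hev] with r hr
    obtain ⟨hg1, hg2⟩ := hr
    exact hGmul _ (hGmul _ (hGmul _ hg1 _ hg2) _ (haux _ hg1).2) _ (haux _ hg2).2
  have hfinvtend : Tendsto (fun r => Ring.inverse (f r)) (𝓝 (0:ℝ)) (𝓝 1) := hinv hftend
  have hg : (fun r : ℝ => Ring.inverse (f r) - 1 - r ^ 2 • (-w)) =o[𝓝 0] fun r => r ^ 2 := by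
    have hgeq2 : ∀ᶠ r in 𝓝 (0 : ℝ), Ring.inverse (f r) - 1 = (1 - f r) * Ring.inverse (f r) := by
      filter_upwards [hfG] with r h
      have hu3 := (haux _ h).1
      rw [sub_mul, one_mul, Ring.mul_inverse_cancel _ hu3]
    have p3 := (hf.mul_isBigO (hfinvtend.isBigO_one ℝ)).neg_left
    have hinv1 : (fun r => 1 - Ring.inverse (f r)) =o[𝓝 (0:ℝ)] (fun _ => (1 : ℝ)) := by
      rw [isLittleO_one_iff]
      simpa using (tendsto_const_nhds (x := (1 : B))).sub hfinvtend
    have p4 := (hsmulO (fun r => r ^ 2) w).mul_isLittleO hinv1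
    have hsum := p3.add p4
    refine hsum.congr' ?_ ?_
    · filter_upwards [hgeq2] with r hr
      rw [smul_neg, sub_neg_eq_add, hr]
      simp only [sub_mul, mul_sub, one_mul, mul_one, neg_sub]
      abel
    · exact Filter.Eventually.of_forall fun r => by ring
  -- composing with square root
  have hsqrt1 : Tendsto Real.sqrt (𝓝 0) (𝓝 0) := by
    have := Real.continuous_sqrt.continuousAt (x := 0)
    simpa [ContinuousAt, Real.sqrt_zero] using this
  have hsqrt2 : Tendsto (fun t : ℝ => Real.sqrt (-t)) (𝓝 0) (𝓝 0) := by
    refine hsqrt1.comp ?_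
    simpa using (continuous_neg.tendsto (0 : ℝ))
  set δ : ℝ → B := fun t => if 0 ≤ t then f (Real.sqrt t) else Ring.inverse (f (Real.sqrt (-t)))
    with hδdef
  have hf0 : f 0 = 1 := by
    rw [hfdef]
    simp [hγ0, hη0, Ring.inverse_one]
  have hδ0 : δ 0 = 1 := by
    rw [hδdef]
    simp [Real.sqrt_zero, hf0]
  have hδneg : ∀ t ≤ (0:ℝ), δ t = Ring.inverse (f (Real.sqrt (-t))) := by
    intro t ht
    rcases eq_or_lt_of_le ht with h | h
    · rw [h]
      simp [hδ0, hf0, Ring.inverse_one]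
    · exact if_neg (not_le.2 h)
  have hδpos : ∀ t : ℝ, 0 ≤ t → δ t = f (Real.sqrt t) := fun t ht => if_pos ht
  have hpos : (fun t : ℝ => δ t - 1 - t • w) =o[𝓝[≥] (0:ℝ)] fun t => t := by
    have h := (hf.comp_tendsto hsqrt1).mono (nhdsWithin_le_nhds : 𝓝[≥] (0:ℝ) ≤ 𝓝 0)
    refine h.congr' ?_ ?_
    · filter_upwards [self_mem_nhdsWithin] with t ht
      simp only [Function.comp_apply]
      rw [Real.sq_sqrt ht, hδpos t ht]
    · filter_upwards [self_mem_nhdsWithin] with t ht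
      simp only [Function.comp_apply]
      exact Real.sq_sqrt ht
  have hneg : (fun t : ℝ => δ t - 1 - t • w) =o[𝓝[≤] (0:ℝ)] fun t => t := by
    have h := (hg.comp_tendsto hsqrt2).mono (nhdsWithin_le_nhds : 𝓝[≤] (0:ℝ) ≤ 𝓝 0)
    have h2 : (fun t : ℝ => δ t - 1 - t • w) =o[𝓝[≤] (0:ℝ)] fun t => -t := by
      refine h.congr' ?_ ?_
      · filter_upwards [self_mem_nhdsWithin] with t ht
        simp only [Function.comp_apply]
        rw [Real.sq_sqrt (neg_nonneg.2 ht), hδneg t ht, neg_smul, smul_neg, neg_neg]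
      · filter_upwards [self_mem_nhdsWithin] with t ht
        simp only [Function.comp_apply]
        exact Real.sq_sqrt (neg_nonneg.2 ht)
    simpa [neg_neg] using h2.neg_right
  have hd : HasDerivAt δ w 0 := by
    rw [hasDerivAt_iff_isLittleO]
    simp only [sub_zero, hδ0]
    rw [← nhdsLE_sup_nhdsGE]
    exact hneg.sup hpos
  -- membership
  set m : ℝ := min b₁ b₂ with hm
  have hm0 : 0 < m := lt_min hb₁ hb₂
  have hmemf : ∀ r : ℝ, 0 ≤ r → r < m → f r ∈ G := by
    intro r h0 hr
    have hg1 : γ r ∈ G := hγG r ⟨lt_of_lt_of_le ha₁ h0, hr.trans_le (min_le_left _ _)⟩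
    have hg2 : η r ∈ G := hηG r ⟨lt_of_lt_of_le ha₂ h0, hr.trans_le (min_le_right _ _)⟩
    exact hGmul _ (hGmul _ (hGmul _ hg1 _ hg2) _ (haux _ hg1).2) _ (haux _ hg2).2
  refine ⟨-(m ^ 2), m ^ 2, δ, neg_lt_zero.mpr (pow_pos hm0 2), pow_pos hm0 2, ?_, hδ0, hd⟩
  intro t ht
  by_cases h : 0 ≤ t
  · rw [hδpos t h]
    exact hmemf _ (Real.sqrt_nonneg t) ((Real.sqrt_lt' hm0).2 ht.2)
  · rw [hδneg t (le_of_not_ge h)]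
    have hlt : Real.sqrt (-t) < m := (Real.sqrt_lt' hm0).2 (by linarith [ht.1])
    exact (haux _ (hmemf _ (Real.sqrt_nonneg _) hlt)).2
end

section
/- Let B be a Banach algebra with unit e and G a closed subgroup of B^×. Then L(G) is a closed subset of B: if (u_n) is a sequence in L(G) converging in norm to u ∈ B, then u ∈ L(G). -/
open Filter Topology

lemma aux_pow_norm {B : Type*} [NormedRing B] (h : B) :
    ∀ k : ℕ, ‖(1 + h) ^ k - 1‖ ≤ (1 + ‖h‖) ^ k - 1 := by
  intro k
  induction k with
  | zero => simp
  | succ k ih =>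
      have key : (1 + h) ^ (k + 1) - 1
          = ((1 + h) ^ k - 1) + h + ((1 + h) ^ k - 1) * h := by
        rw [pow_succ]; noncomm_ring
      have h1 : ‖(1 + h) ^ (k + 1) - 1‖
          ≤ ‖(1 + h) ^ k - 1‖ + ‖h‖ + ‖(1 + h) ^ k - 1‖ * ‖h‖ := by
        rw [key]
        refine (norm_add_le _ _).trans ?_
        gcongr
        exacts [norm_add_le _ _, norm_mul_le _ _]
      have h2 : (1 + ‖h‖) ^ (k + 1) - 1
          = ((1 + ‖h‖) ^ k - 1) + ‖h‖ + ((1 + ‖h‖) ^ k - 1) * ‖h‖ := by ring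
      rw [h2]
      have hn : (0:ℝ) ≤ ‖h‖ := norm_nonneg _
      nlinarith [ih, norm_nonneg ((1 + h) ^ k - 1)]

lemma aux_pow_sub_pow_s10 {B : Type*} [NormedRing B] (a b : B) (n : ℕ) (K : ℝ)
    (ha : ∀ k ≤ n, ‖a ^ k‖ ≤ K) (hb : ∀ k ≤ n, ‖b ^ k‖ ≤ K) :
    ‖a ^ n - b ^ n‖ ≤ n * (K * K) * ‖a - b‖ := by
  have hK : 0 ≤ K := le_trans (norm_nonneg _) (ha 0 (Nat.zero_le _))
  have key : a ^ n - b ^ n = ∑ k ∈ Finset.range n, a ^ k * (a - b) * b ^ (n - 1 - k) := by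
    have := Finset.sum_range_sub (f := fun k => a ^ k * b ^ (n - k)) n
    simp only [pow_zero, one_mul, Nat.sub_self, mul_one, Nat.sub_zero] at this
    rw [← this]
    refine Finset.sum_congr rfl fun k hk => ?_
    have hk' : k < n := Finset.mem_range.mp hk
    have h1 : n - k = (n - 1 - k) + 1 := by omega
    have h2 : n - (k + 1) = n - 1 - k := by omega
    rw [h1, h2, pow_succ, pow_succ']
    noncomm_ring
  rw [key]
  calc ‖∑ k ∈ Finset.range n, a ^ k * (a - b) * b ^ (n - 1 - k)‖
      ≤ ∑ k ∈ Finset.range n, ‖a ^ k * (a - b) * b ^ (n - 1 - k)‖ := norm_sum_le _ _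
    _ ≤ ∑ k ∈ Finset.range n, K * ‖a - b‖ * K := by
        refine Finset.sum_le_sum fun k hk => ?_
        have hk' : k < n := Finset.mem_range.mp hk
        refine (norm_mul_le _ _).trans ?_
        refine mul_le_mul ((norm_mul_le _ _).trans ?_) (hb _ (by omega)) (norm_nonneg _)
          (by positivity)
        exact mul_le_mul (ha _ (by omega)) le_rfl (norm_nonneg _) hK
    _ = n * (K * K) * ‖a - b‖ := by
        rw [Finset.sum_const, Finset.card_range]; ring

lemma aux_pow_bound {B : Type*} [NormedRing B] (x : B) (k n : ℕ) (C : ℝ) (hk : k ≤ n)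
    (h : (n : ℝ) * ‖x - 1‖ ≤ C) : ‖x ^ k‖ ≤ ‖(1 : B)‖ + (Real.exp C - 1) := by
  have hd : (0:ℝ) ≤ ‖x - 1‖ := norm_nonneg _
  have h1 : ‖x ^ k - 1‖ ≤ (1 + ‖x - 1‖) ^ k - 1 := by
    simpa using aux_pow_norm (x - 1) k
  have h2 : (1 + ‖x - 1‖) ^ k ≤ Real.exp ((k : ℝ) * ‖x - 1‖) := by
    rw [Real.exp_nat_mul]
    exact pow_le_pow_left₀ (by positivity) (by linarith [Real.add_one_le_exp ‖x - 1‖]) k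
  have h3 : (k : ℝ) * ‖x - 1‖ ≤ C := by
    refine le_trans ?_ h
    have : (k : ℝ) ≤ (n : ℝ) := Nat.cast_le.mpr hk
    nlinarith
  have h4 : ‖x ^ k‖ ≤ ‖x ^ k - 1‖ + ‖(1 : B)‖ := by
    simpa using norm_add_le (x ^ k - 1) 1
  have := Real.exp_le_exp.mpr h3
  linarith

lemma aux_exp_mem {B : Type*} [NormedRing B] [NormedAlgebra ℝ B] [CompleteSpace B]
    {G : Set B} (hGclosed : IsClosed G) (hGone : (1 : B) ∈ G)
    (hGmul : ∀ x ∈ G, ∀ y ∈ G, x * y ∈ G)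
    {u : B} (hu : u ∈ tangentSet G) (t : ℝ) :
    NormedSpace.exp (t • u) ∈ G := by
  have hpow : ∀ x ∈ G, ∀ k : ℕ, x ^ k ∈ G := by
    intro x hx k
    induction k with
    | zero => simpa using hGone
    | succ k ih => rw [pow_succ]; exact hGmul _ ih _ hx
  obtain ⟨a, b, γ, ha, hb, hmem, h0, hderiv⟩ := hu
  rcases eq_or_ne t 0 with rfl | ht
  · simpa [NormedSpace.exp_zero] using hGone
  set E : ℝ → B := fun s => NormedSpace.exp (s • u) with hEdef
  have hE : HasDerivAt E u 0 := by
    simpa [hEdef] using hasDerivAt_exp_smul_const' (𝕂 := ℝ) u (0:ℝ)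
  have hE0 : E 0 = 1 := by simp [hEdef, NormedSpace.exp_zero]
  -- generic slope limit
  have slope_lim : ∀ (f : ℝ → B) (w : B), HasDerivAt f w 0 →
      Tendsto (fun n : ℕ => (n : ℝ) • (f (t / n) - f 0)) atTop (𝓝 (t • w)) := by
    intro f w hf
    have h1 : Tendsto (fun n : ℕ => (t / n : ℝ)) atTop (𝓝[≠] 0) := by
      rw [tendsto_nhdsWithin_iff]
      refine ⟨tendsto_const_div_atTop_nhds_zero_nat t, ?_⟩
      filter_upwards [Filter.eventually_gt_atTop 0] with n hn
      exact div_ne_zero ht (Nat.cast_ne_zero.mpr hn.ne')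
    have h2 := (hasDerivAt_iff_tendsto_slope.mp hf).comp h1
    have h3 := h2.const_smul t
    refine h3.congr' ?_
    filter_upwards [Filter.eventually_gt_atTop 0] with n hn
    have hn' : (n : ℝ) ≠ 0 := Nat.cast_ne_zero.mpr hn.ne'
    simp only [Function.comp, slope_def_module, sub_zero]
    rw [smul_smul]
    congr 1
    field_simp
  have hδ : HasDerivAt (fun s => γ s - E s) 0 0 := by
    have := hderiv.sub hE; rw [sub_self] at this; exact this
  have Lγ : Tendsto (fun n : ℕ => (n : ℝ) • (γ (t / n) - 1)) atTop (𝓝 (t • u)) := by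
    simpa [h0] using slope_lim γ u hderiv
  have LE : Tendsto (fun n : ℕ => (n : ℝ) • (E (t / n) - 1)) atTop (𝓝 (t • u)) := by
    simpa [hE0] using slope_lim E u hE
  have Lδ : Tendsto (fun n : ℕ => (n : ℝ) • (γ (t / n) - E (t / n))) atTop (𝓝 0) := by
    simpa [h0, hE0] using slope_lim (fun s => γ s - E s) 0 hδ
  set C : ℝ := ‖t • u‖ + 1 with hCdef
  have normsmul : ∀ (n : ℕ) (x : B), ‖(n : ℝ) • x‖ = (n : ℝ) * ‖x‖ := by
    intro n x
    rw [norm_smul, Real.norm_natCast]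
  have hCγ : ∀ᶠ n : ℕ in atTop, (n : ℝ) * ‖γ (t / n) - 1‖ ≤ C := by
    filter_upwards [Lγ.norm.eventually_lt_const (show ‖t • u‖ < C by rw [hCdef]; linarith)] with n hn
    rw [← normsmul]; exact hn.le
  have hCE : ∀ᶠ n : ℕ in atTop, (n : ℝ) * ‖E (t / n) - 1‖ ≤ C := by
    filter_upwards [LE.norm.eventually_lt_const (show ‖t • u‖ < C by rw [hCdef]; linarith)] with n hn
    rw [← normsmul]; exact hn.le
  set K : ℝ := ‖(1 : B)‖ + (Real.exp C - 1) with hKdef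
  have hC1 : (1:ℝ) ≤ Real.exp C := Real.one_le_exp (by rw [hCdef]; positivity)
  have hK0 : (0:ℝ) ≤ K := by
    have := norm_nonneg (1 : B)
    rw [hKdef]; linarith
  have hKK : (0:ℝ) ≤ K * K := mul_nonneg hK0 hK0
  have hmain : ∀ᶠ n : ℕ in atTop,
      ‖γ (t / n) ^ n - NormedSpace.exp (t • u)‖
        ≤ (K * K) * ‖(n : ℝ) • (γ (t / n) - E (t / n))‖ := by
    filter_upwards [hCγ, hCE, Filter.eventually_gt_atTop 0] with n hγn hEn hn
    have hn' : (n : ℝ) ≠ 0 := Nat.cast_ne_zero.mpr hn.ne'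
    have hEpow : E (t / n) ^ n = NormedSpace.exp (t • u) := by
      rw [hEdef]
      let +nondep : NormedAlgebra ℚ B := .restrictScalars ℚ ℝ B
      rw [← NormedSpace.exp_nsmul, ← Nat.cast_smul_eq_nsmul ℝ, smul_smul,
        mul_div_cancel₀ t hn']
    rw [← hEpow, normsmul]
    calc ‖γ (t / n) ^ n - E (t / n) ^ n‖
        ≤ (n : ℝ) * (K * K) * ‖γ (t / n) - E (t / n)‖ :=
          aux_pow_sub_pow_s10 _ _ n K
            (fun k hk => aux_pow_bound _ k n C hk hγn)
            (fun k hk => aux_pow_bound _ k n C hk hEn)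
      _ = K * K * ((n : ℝ) * ‖γ (t / n) - E (t / n)‖) := by ring
  have htendsto : Tendsto (fun n : ℕ => γ (t / n) ^ n) atTop
      (𝓝 (NormedSpace.exp (t • u))) := by
    rw [tendsto_iff_norm_sub_tendsto_zero]
    have hrhs : Tendsto (fun n : ℕ => (K * K) * ‖(n : ℝ) • (γ (t / n) - E (t / n))‖)
        atTop (𝓝 0) := by
      simpa using (Lδ.norm.const_mul (K * K))
    exact squeeze_zero' (Filter.Eventually.of_forall fun n => norm_nonneg _) hmain hrhs
  refine hGclosed.mem_of_tendsto htendsto ?_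
  have hIoo : ∀ᶠ n : ℕ in atTop, t / n ∈ Set.Ioo a b :=
    (tendsto_const_div_atTop_nhds_zero_nat t).eventually_mem (Ioo_mem_nhds ha hb)
  filter_upwards [hIoo] with n hn
  exact hpow _ (hmem _ hn) n

/-- `L(G)` is closed: the limit of a norm-convergent sequence of elements of `L(G)`
belongs to `L(G)`. -/
theorem stmt10
    {B : Type*} [NormedRing B] [NormedAlgebra ℝ B] [CompleteSpace B]
    (G : Set B) (hGclosed : IsClosed G)
    (hGone : (1 : B) ∈ G)
    (hGmul : ∀ x ∈ G, ∀ y ∈ G, x * y ∈ G)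
    (hGinv : ∀ x ∈ G, ∃ y ∈ G, x * y = 1 ∧ y * x = 1)
    (u : ℕ → B) (hu : ∀ n, u n ∈ tangentSet G)
    (v : B) (hlim : Filter.Tendsto u Filter.atTop (nhds v)) :
    v ∈ tangentSet G := by
  have hv : ∀ t : ℝ, NormedSpace.exp (t • v) ∈ G := by
    intro t
    let +nondep : NormedAlgebra ℚ B := .restrictScalars ℚ ℝ B
    exact hGclosed.mem_of_tendsto
      ((NormedSpace.exp_continuous.tendsto _).comp (hlim.const_smul t))
      (Filter.Eventually.of_forall fun n =>
        aux_exp_mem hGclosed hGone hGmul (hu n) t)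
  refine ⟨-1, 1, fun s => NormedSpace.exp (s • v), by norm_num, one_pos,
    fun s _ => hv s, by simp [NormedSpace.exp_zero], ?_⟩
  simpa using hasDerivAt_exp_smul_const' (𝕂 := ℝ) v (0 : ℝ)
end

section
/- Let Ω = ℂ ∖ ((−∞,0] ∪ [1,+∞)) and, for α, β ∈ ℂ, let f_{α,β} : Ω → ℂ be the holomorphic function f_{α,β}(z) = exp(α·log z + β·log(1−z)) (principal branches of the logarithm), so that C = span_ℂ{ f_{α,β} : α, β ∈ ℂ } is a subalgebra of the holomorphic functions on Ω. If P₁, P₂, P₃ ∈ C satisfy P₁(z) + P₂(z)·log z + P₃(z)·log(1/(1−z)) = 0 for all z ∈ Ω, then P₁ = P₂ = P₃ = 0. Equivalently, the functions 1, log z and log(1/(1−z)) are linearly independent over the algebra C. -/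
/-- The doubly slit plane `Ω = ℂ ∖ ((−∞,0] ∪ [1,+∞))`. -/
def Omega : Set ℂ :=
  {z : ℂ | (∀ x : ℝ, x ≤ 0 → z ≠ (x : ℂ)) ∧ (∀ x : ℝ, 1 ≤ x → z ≠ (x : ℂ))}

/-- The function `z ↦ z^α (1-z)^β = exp(α·log z + β·log(1−z))` on `Ω`
(principal branches of the logarithm). -/
noncomputable def fPow (α β : ℂ) : Omega → ℂ :=
  fun z => Complex.exp (α * Complex.log (z : ℂ) + β * Complex.log (1 - (z : ℂ)))

open Complex Finset

/-- Global version of `fPow`. -/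
noncomputable def Fg (γ : ℂ × ℂ) (z : ℂ) : ℂ :=
  Complex.exp (γ.1 * Complex.log z + γ.2 * Complex.log (1 - z))

lemma slit_of_mem_Omega {z : ℂ} (hz : z ∈ Omega) : z ∈ Complex.slitPlane := by
  rw [Complex.mem_slitPlane_iff]
  by_contra hcon
  push_neg at hcon
  exact hz.1 z.re hcon.1 (Complex.ext (by simp) (by simp [hcon.2]))

lemma slit_of_mem_Omega' {z : ℂ} (hz : z ∈ Omega) : (1 - z) ∈ Complex.slitPlane := by
  rw [Complex.mem_slitPlane_iff]
  by_contra hcon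
  push_neg at hcon
  have h1 : z.im = 0 := by
    have := hcon.2; simp [Complex.sub_im] at this; simpa using this
  have h2 : (1:ℝ) ≤ z.re := by
    have := hcon.1; simp [Complex.sub_re] at this; linarith
  exact hz.2 z.re h2 (Complex.ext (by simp) (by simp [h1]))

lemma ball_subset_Omega : Metric.ball ((2:ℂ)⁻¹) (8⁻¹ : ℝ) ⊆ Omega := by
  intro z hz
  rw [Metric.mem_ball, Complex.dist_eq] at hz
  constructor
  · intro x hx hzx
    subst hzx
    have : ‖((x : ℂ) - 2⁻¹)‖ = |x - 2⁻¹| := by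
      rw [show ((x:ℂ) - 2⁻¹) = ((x - 2⁻¹ : ℝ) : ℂ) by push_cast; ring, Complex.norm_real, Real.norm_eq_abs]
    rw [this] at hz
    have : |x - 2⁻¹| ≥ 2⁻¹ := by rw [abs_sub_comm]; rw [abs_of_pos (by linarith)]; linarith
    linarith
  · intro x hx hzx
    subst hzx
    have : ‖((x : ℂ) - 2⁻¹)‖ = |x - 2⁻¹| := by
      rw [show ((x:ℂ) - 2⁻¹) = ((x - 2⁻¹ : ℝ) : ℂ) by push_cast; ring, Complex.norm_real, Real.norm_eq_abs]
    rw [this] at hz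
    have : |x - 2⁻¹| ≥ 2⁻¹ := by rw [abs_of_pos (by linarith)]; linarith
    linarith

lemma isOpen_Omega : IsOpen Omega := by
  have : Omega = ((Complex.ofReal '' Set.Iic 0) ∪ (Complex.ofReal '' Set.Ici 1))ᶜ := by
    ext z
    simp only [Omega, Set.mem_setOf_eq, Set.mem_compl_iff, Set.mem_union, Set.mem_image,
      Set.mem_Iic, Set.mem_Ici, not_or, not_exists]
    constructor
    · rintro ⟨h1, h2⟩
      exact ⟨fun x => by rintro ⟨hx, rfl⟩; exact h1 x hx rfl,
             fun x => by rintro ⟨hx, rfl⟩; exact h2 x hx rfl⟩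
    · rintro ⟨h1, h2⟩
      exact ⟨fun x hx hzx => h1 x ⟨hx, hzx.symm⟩, fun x hx hzx => h2 x ⟨hx, hzx.symm⟩⟩
  rw [this]
  rw [isOpen_compl_iff]
  exact IsClosed.union
    (Complex.isometry_ofReal.isClosedEmbedding.isClosedMap _ isClosed_Iic)
    (Complex.isometry_ofReal.isClosedEmbedding.isClosedMap _ isClosed_Ici)

lemma real_mem_closure_halfplane_pos (x : ℝ) :
    (x : ℂ) ∈ closure {z : ℂ | 0 < z.im} := by
  have h1 : Filter.Tendsto (fun n : ℕ => (((n:ℝ)+1)⁻¹ : ℝ)) Filter.atTop (nhds 0) := by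
    simpa [one_div] using tendsto_one_div_add_atTop_nhds_zero_nat (𝕜 := ℝ)
  have hseq : Filter.Tendsto (fun n : ℕ => (x : ℂ) + ((((n:ℝ)+1)⁻¹ : ℝ) : ℂ) * Complex.I)
      Filter.atTop (nhds (x : ℂ)) := by
    have : Filter.Tendsto (fun n : ℕ => (x : ℂ) + ((((n:ℝ)+1)⁻¹ : ℝ) : ℂ) * Complex.I)
        Filter.atTop (nhds ((x:ℂ) + ((0:ℝ):ℂ) * Complex.I)) := by
      apply Filter.Tendsto.add tendsto_const_nhds
      exact (Filter.Tendsto.comp (Complex.continuous_ofReal.tendsto 0) h1).mul tendsto_const_nhds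
    simpa using this
  apply mem_closure_of_tendsto hseq
  apply Filter.Eventually.of_forall
  intro n
  have : (0:ℝ) < ((n:ℝ)+1)⁻¹ := by positivity
  simp only [Set.mem_setOf_eq, Complex.add_im, Complex.ofReal_im, Complex.mul_im,
    Complex.ofReal_re, Complex.I_im, Complex.I_re, mul_zero, mul_one, zero_add]
  linarith

lemma real_mem_closure_halfplane_neg (x : ℝ) :
    (x : ℂ) ∈ closure {z : ℂ | z.im < 0} := by
  have h1 : Filter.Tendsto (fun n : ℕ => (((n:ℝ)+1)⁻¹ : ℝ)) Filter.atTop (nhds 0) := by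
    simpa [one_div] using tendsto_one_div_add_atTop_nhds_zero_nat (𝕜 := ℝ)
  have hseq : Filter.Tendsto (fun n : ℕ => (x : ℂ) - ((((n:ℝ)+1)⁻¹ : ℝ) : ℂ) * Complex.I)
      Filter.atTop (nhds (x : ℂ)) := by
    have : Filter.Tendsto (fun n : ℕ => (x : ℂ) - ((((n:ℝ)+1)⁻¹ : ℝ) : ℂ) * Complex.I)
        Filter.atTop (nhds ((x:ℂ) - ((0:ℝ):ℂ) * Complex.I)) := by
      apply Filter.Tendsto.sub tendsto_const_nhds
      exact (Filter.Tendsto.comp (Complex.continuous_ofReal.tendsto 0) h1).mul tendsto_const_nhds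
    simpa using this
  apply mem_closure_of_tendsto hseq
  apply Filter.Eventually.of_forall
  intro n
  have : (0:ℝ) < ((n:ℝ)+1)⁻¹ := by positivity
  simp only [Set.mem_setOf_eq, Complex.sub_im, Complex.ofReal_im, Complex.mul_im,
    Complex.ofReal_re, Complex.I_im, Complex.I_re, mul_zero, mul_one, zero_sub]
  linarith

lemma preconnected_Omega : IsPreconnected Omega := by
  set I : Set ℂ := Complex.ofReal '' Set.Ioo 0 1 with hI
  set Tp : Set ℂ := {z : ℂ | 0 < z.im} ∪ I with hTp
  set Tm : Set ℂ := {z : ℂ | z.im < 0} ∪ I with hTm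
  have hIsub : ∀ x ∈ Set.Ioo (0:ℝ) 1, (x:ℂ) ∈ Omega := by
    intro x hx
    constructor
    · intro y hy hxy
      have : x = y := by exact_mod_cast hxy
      subst this; exact absurd hx.1 (by linarith)
    · intro y hy hxy
      have : x = y := by exact_mod_cast hxy
      subst this; exact absurd hx.2 (by linarith)
  have hTpconn : IsPreconnected Tp := by
    apply IsPreconnected.subset_closure
      (s := {z : ℂ | 0 < z.im})
      ((convex_halfSpace_im_gt 0).isPreconnected)
      Set.subset_union_left
    rintro z (hz | ⟨x, hx, rfl⟩)
    · exact subset_closure hz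
    · exact real_mem_closure_halfplane_pos x
  have hTmconn : IsPreconnected Tm := by
    apply IsPreconnected.subset_closure
      (s := {z : ℂ | z.im < 0})
      ((convex_halfSpace_im_lt 0).isPreconnected)
      Set.subset_union_left
    rintro z (hz | ⟨x, hx, rfl⟩)
    · exact subset_closure hz
    · exact real_mem_closure_halfplane_neg x
  have hmem : ((2:ℝ)⁻¹ : ℂ) ∈ I := ⟨2⁻¹, by norm_num, by norm_num⟩
  have hunion : Omega = Tp ∪ Tm := by
    ext z
    constructor
    · intro hz
      rcases lt_trichotomy z.im 0 with him | him | him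
      · exact Or.inr (Or.inl him)
      · -- z is real
        have hzre : z = (z.re : ℂ) := Complex.ext (by simp) (by simp [him])
        have h0 : 0 < z.re := by
          by_contra hcon; push_neg at hcon
          exact hz.1 z.re hcon hzre
        have h1 : z.re < 1 := by
          by_contra hcon; push_neg at hcon
          exact hz.2 z.re hcon hzre
        exact Or.inl (Or.inr ⟨z.re, ⟨h0, h1⟩, hzre.symm⟩)
      · exact Or.inl (Or.inl him)
    · rintro ((hz | ⟨x, hx, rfl⟩) | (hz | ⟨x, hx, rfl⟩))
      · constructor <;> · intro x hx hzx; subst hzx; simp only [Set.mem_setOf_eq,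
          Complex.ofReal_im] at hz; exact lt_irrefl 0 hz
      · exact hIsub x hx
      · constructor <;> · intro x hx hzx; subst hzx; simp only [Set.mem_setOf_eq,
          Complex.ofReal_im] at hz; exact lt_irrefl 0 hz
      · exact hIsub x hx
  rw [hunion]
  exact IsPreconnected.union ((2:ℝ)⁻¹ : ℂ) (Or.inr hmem) (Or.inr hmem) hTpconn hTmconn

open Polynomial in
lemma phi_zero (T : Finset ℂ) (A B : ℂ → ℂ)
    (h : ∀ n : ℕ, ∑ m ∈ T, m ^ n * (A m + n * B m) = 0) (p : Polynomial ℂ) :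
    ∑ m ∈ T, (A m * p.eval m + B m * (m * p.derivative.eval m)) = 0 := by
  induction p using Polynomial.induction_on' with
  | add p q hp hq =>
      have : ∑ m ∈ T, (A m * (p + q).eval m + B m * (m * (p + q).derivative.eval m))
          = (∑ m ∈ T, (A m * p.eval m + B m * (m * p.derivative.eval m)))
            + ∑ m ∈ T, (A m * q.eval m + B m * (m * q.derivative.eval m)) := by
        rw [← Finset.sum_add_distrib]
        apply Finset.sum_congr rfl
        intro m _
        simp only [Polynomial.eval_add, Polynomial.derivative_add]
        ring
      rw [this, hp, hq, add_zero]
  | monomial n t =>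
      have key : ∀ m : ℂ, A m * ((Polynomial.monomial n t).eval m)
          + B m * (m * ((Polynomial.monomial n t).derivative.eval m))
          = t * (m ^ n * (A m + n * B m)) := by
        intro m
        rw [Polynomial.eval_monomial, Polynomial.derivative_monomial, Polynomial.eval_monomial]
        cases n with
        | zero => simp [mul_comm]
        | succ k =>
            rw [Nat.add_sub_cancel]
            push_cast
            rw [pow_succ]
            ring
      calc ∑ m ∈ T, (A m * ((Polynomial.monomial n t).eval m)
              + B m * (m * ((Polynomial.monomial n t).derivative.eval m)))
          = ∑ m ∈ T, t * (m ^ n * (A m + n * B m)) := Finset.sum_congr rfl fun m _ => key m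
        _ = t * ∑ m ∈ T, m ^ n * (A m + n * B m) := by rw [Finset.mul_sum]
        _ = 0 := by rw [h n, mul_zero]

open Polynomial in
lemma vandermondeB (T : Finset ℂ) (hT : (0:ℂ) ∉ T) (A B : ℂ → ℂ)
    (h : ∀ n : ℕ, ∑ m ∈ T, m ^ n * (A m + n * B m) = 0) :
    ∀ m₀ ∈ T, B m₀ = 0 := by
  classical
  intro m₀ hm₀
  set q : Polynomial ℂ := ∏ m ∈ T.erase m₀, (X - C m)^2 with hq
  set p : Polynomial ℂ := q * (X - C m₀) with hp
  have hΦ := phi_zero T A B h p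
  have hqval : q.eval m₀ ≠ 0 := by
    rw [hq]
    simp only [Polynomial.eval_prod, Polynomial.eval_pow, Polynomial.eval_sub,
      Polynomial.eval_X, Polynomial.eval_C]
    apply Finset.prod_ne_zero_iff.mpr
    intro m hm
    exact pow_ne_zero _ (sub_ne_zero.mpr (Finset.ne_of_mem_erase hm).symm)
  have hqzero : ∀ m ∈ T.erase m₀, q.eval m = 0 := by
    intro m hm
    rw [hq, Polynomial.eval_prod]
    exact Finset.prod_eq_zero hm (by simp)
  have hpval : ∀ m ∈ T, p.eval m = 0 := by
    intro m hm
    by_cases hmm : m = m₀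
    · subst hmm; simp [hp]
    · rw [hp, Polynomial.eval_mul, hqzero m (Finset.mem_erase.mpr ⟨hmm, hm⟩), zero_mul]
  have hder : ∀ m ∈ T.erase m₀, p.derivative.eval m = 0 := by
    intro m hm
    have hq'0 : q.derivative.eval m = 0 := by
      have hfac : q = (X - C m)^2 * ∏ x ∈ (T.erase m₀).erase m, (X - C x)^2 := by
        rw [hq, ← Finset.mul_prod_erase (T.erase m₀) (fun x => (X - C x)^2) hm]
      rw [hfac, Polynomial.derivative_mul, Polynomial.eval_add, Polynomial.eval_mul,
        Polynomial.eval_mul, Polynomial.derivative_pow]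
      simp
    rw [hp, Polynomial.derivative_mul, Polynomial.eval_add, Polynomial.eval_mul,
      Polynomial.eval_mul, hq'0, hqzero m hm]
    simp
  have hderm₀ : p.derivative.eval m₀ = q.eval m₀ := by
    rw [hp, Polynomial.derivative_mul, Polynomial.eval_add, Polynomial.eval_mul,
      Polynomial.eval_mul]
    simp
  rw [Finset.sum_eq_single m₀ (fun m hm hmm => by
      rw [hpval m hm, hder m (Finset.mem_erase.mpr ⟨hmm, hm⟩)]; ring)
    (fun hcon => absurd hm₀ hcon)] at hΦ
  rw [hpval m₀ hm₀, hderm₀, mul_zero, zero_add] at hΦ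
  have hm₀0 : m₀ ≠ 0 := fun hcon => hT (hcon ▸ hm₀)
  rcases mul_eq_zero.mp hΦ with h1 | h2
  · exact h1
  · exact absurd (mul_eq_zero.mp h2) (by push_neg; exact ⟨hm₀0, hqval⟩)

lemma split (s : Finset (ℂ × ℂ)) (a b c : ℂ × ℂ → ℂ)
    (hrel : ∀ z ∈ Metric.ball ((2:ℂ)⁻¹) (8⁻¹ : ℝ),
      ∑ γ ∈ s, Fg γ z * (a γ + b γ * Complex.log z - c γ * Complex.log (1 - z)) = 0) :
    ∀ z ∈ Metric.ball ((2:ℂ)⁻¹) (8⁻¹ : ℝ), ∑ γ ∈ s, b γ * Fg γ z = 0 := by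
  classical
  set D : Set ℂ := {w : ℂ | w.re < 0} with hD
  have hDopen : IsOpen D := isOpen_lt Complex.continuous_re continuous_const
  have hDconn : IsPreconnected D := (convex_halfSpace_re_lt 0).isPreconnected
  set N : ℂ → ℂ := fun w => Complex.log (1 - Complex.exp w) with hN
  set H : ℂ → ℂ := fun w => ∑ γ ∈ s,
    Complex.exp (γ.1 * w + γ.2 * N w) * (a γ + b γ * w - c γ * N w) with hH
  have hslit : ∀ w : ℂ, w ∈ D → (1 - Complex.exp w) ∈ Complex.slitPlane := by
    intro w hw
    rw [Complex.mem_slitPlane_iff]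
    left
    have h1 : (Complex.exp w).re ≤ ‖Complex.exp w‖ := Complex.re_le_norm _
    rw [Complex.norm_exp] at h1
    have h2 : Real.exp w.re < 1 := Real.exp_lt_one_iff.mpr hw
    simp only [Complex.sub_re, Complex.one_re]
    linarith
  have hHdiff : DifferentiableOn ℂ H D := by
    apply DifferentiableOn.fun_sum
    intro γ _
    intro w hw
    apply DifferentiableAt.differentiableWithinAt
    have hNd : DifferentiableAt ℂ N w := by
      have h1 : DifferentiableAt ℂ (fun w : ℂ => 1 - Complex.exp w) w :=
        (differentiableAt_const (1:ℂ)).sub Complex.differentiable_exp.differentiableAt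
      exact (Complex.differentiableAt_log (hslit w hw)).comp w h1
    have hid : DifferentiableAt ℂ (fun w : ℂ => w) w := differentiableAt_fun_id
    exact ((hid.const_mul γ.1).add (hNd.const_mul γ.2)).cexp.mul
      (((hid.const_mul (b γ)).const_add (a γ)).sub (hNd.const_mul (c γ)))
  set V : Set ℂ := {w : ℂ | w.re < 0 ∧ |w.im| < Real.pi ∧
      Complex.exp w ∈ Metric.ball ((2:ℂ)⁻¹) (8⁻¹ : ℝ)} with hV
  have hVopen : IsOpen V := by
    rw [hV, Set.setOf_and, Set.setOf_and]
    refine (isOpen_lt Complex.continuous_re continuous_const).inter (IsOpen.inter ?_ ?_)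
    · exact isOpen_lt (continuous_abs.comp Complex.continuous_im) continuous_const
    · exact Metric.isOpen_ball.preimage Complex.continuous_exp
  have hw₀V : ((Real.log 2⁻¹ : ℝ) : ℂ) ∈ V := by
    refine ⟨?_, ?_, ?_⟩
    · simp only [Complex.ofReal_re]
      exact Real.log_neg (by norm_num) (by norm_num)
    · simp only [Complex.ofReal_im, abs_zero]
      exact Real.pi_pos
    · rw [← Complex.ofReal_exp, Real.exp_log (by norm_num : (0:ℝ) < 2⁻¹)]
      simpa using Metric.mem_ball_self (by norm_num : (0:ℝ) < 8⁻¹)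
  have hw₀D : ((Real.log 2⁻¹ : ℝ) : ℂ) ∈ D := by
    simp only [hD, Set.mem_setOf_eq, Complex.ofReal_re]
    exact Real.log_neg (by norm_num) (by norm_num)
  have hHV : Set.EqOn H 0 V := by
    intro w hw
    obtain ⟨hw1, hw2, hw3⟩ := hw
    have habs := abs_lt.mp hw2
    have hlogexp : Complex.log (Complex.exp w) = w := Complex.log_exp habs.1 (le_of_lt habs.2)
    have := hrel (Complex.exp w) hw3
    rw [hH]
    simp only [Pi.zero_apply]
    rw [← this]
    apply Finset.sum_congr rfl
    intro γ _
    rw [Fg, hlogexp]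
  have hH0 : Set.EqOn H 0 D :=
    (hHdiff.analyticOnNhd hDopen).eqOn_zero_of_preconnected_of_eventuallyEq_zero hDconn hw₀D
      (Filter.eventuallyEq_of_mem (hVopen.mem_nhds hw₀V) hHV)
  -- main extraction
  intro z hz
  have hz0 : z ≠ 0 := by
    intro hcon
    subst hcon
    rw [Metric.mem_ball, Complex.dist_eq] at hz
    simp only [zero_sub, norm_neg, norm_inv, Complex.norm_two] at hz
    norm_num at hz
  have habs1 : ‖z‖ < 1 := by
    rw [Metric.mem_ball, Complex.dist_eq] at hz
    have h2 : ‖((2:ℂ)⁻¹)‖ = 2⁻¹ := by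
      rw [norm_inv, Complex.norm_two]
    calc ‖z‖ = ‖((z - 2⁻¹) + 2⁻¹)‖ := by ring_nf
      _ ≤ ‖(z - 2⁻¹)‖ + ‖((2:ℂ)⁻¹)‖ := norm_add_le _ _
      _ < 8⁻¹ + 2⁻¹ := by rw [h2]; linarith
      _ < 1 := by norm_num
  set w : ℂ := Complex.log z with hw
  have hexpw : Complex.exp w = z := Complex.exp_log hz0
  have hwD : w ∈ D := by
    simp only [hD, Set.mem_setOf_eq, hw, Complex.log_re]
    exact Real.log_neg (norm_pos_iff.mpr hz0) habs1
  have hNz : N w = Complex.log (1 - z) := by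
    show Complex.log (1 - Complex.exp w) = _
    rw [hexpw]
  set A' : ℂ × ℂ → ℂ := fun γ =>
    Fg γ z * (a γ + b γ * Complex.log z - c γ * Complex.log (1 - z)) with hA'
  set B' : ℂ × ℂ → ℂ := fun γ => 2 * Real.pi * Complex.I * b γ * Fg γ z with hB'
  set μ : ℂ × ℂ → ℂ := fun γ => Complex.exp (2 * Real.pi * Complex.I * γ.1) with hμ
  have hkey : ∀ n : ℕ, ∑ γ ∈ s, (μ γ) ^ n * (A' γ + n * B' γ) = 0 := by
    intro n
    set sh : ℂ := ((2 * Real.pi * n : ℝ) : ℂ) * Complex.I with hsh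
    have hshD : (w + sh) ∈ D := by
      simp only [hD, Set.mem_setOf_eq, Complex.add_re, hsh, Complex.mul_re,
        Complex.ofReal_re, Complex.I_re, Complex.ofReal_im, Complex.I_im]
      simp only [mul_zero, zero_mul, sub_zero, mul_one]
      simpa [hD] using hwD
    have hexpsh : Complex.exp (w + sh) = z := by
      have h1 : sh = (n : ℤ) * (2 * (Real.pi : ℂ) * Complex.I) := by
        rw [hsh]; push_cast; ring
      rw [Complex.exp_add, h1, Complex.exp_int_mul_two_pi_mul_I, mul_one, hexpw]
    have h0 := hH0 hshD
    rw [hH] at h0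
    simp only [Pi.zero_apply] at h0
    rw [← h0]
    apply Finset.sum_congr rfl
    intro γ _
    have hNsh : N (w + sh) = Complex.log (1 - z) := by
      show Complex.log (1 - Complex.exp (w + sh)) = _
      rw [hexpsh]
    rw [hNsh]
    have hexpfac : Complex.exp (γ.1 * (w + sh) + γ.2 * Complex.log (1 - z))
        = Fg γ z * (μ γ) ^ n := by
      have h1 : γ.1 * (w + sh) + γ.2 * Complex.log (1 - z)
          = (γ.1 * Complex.log z + γ.2 * Complex.log (1 - z)) + (n : ℂ) * (2 * Real.pi * Complex.I * γ.1) := by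
        rw [hsh, hw]; push_cast; ring
      rw [h1, Complex.exp_add, Fg, hμ, Complex.exp_nat_mul]
    have hlin : a γ + b γ * (w + sh) - c γ * Complex.log (1 - z)
        = (a γ + b γ * Complex.log z - c γ * Complex.log (1 - z)) + (n : ℂ) * (2 * Real.pi * Complex.I * b γ) := by
      rw [hsh, hw]; push_cast; ring
    rw [hexpfac, hlin, hA', hB', hμ]
    ring
  -- grouping by the value of μ
  set T : Finset ℂ := s.image μ with hT
  have hT0 : (0:ℂ) ∉ T := by
    intro hcon
    rcases Finset.mem_image.mp hcon with ⟨γ, _, hγ⟩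
    exact Complex.exp_ne_zero _ hγ
  set Ag : ℂ → ℂ := fun m => ∑ γ ∈ s.filter (fun γ => μ γ = m), A' γ with hAg
  set Bg : ℂ → ℂ := fun m => ∑ γ ∈ s.filter (fun γ => μ γ = m), B' γ with hBg
  have hfiber : ∀ (f : ℂ × ℂ → ℂ), ∑ m ∈ T, ∑ γ ∈ s.filter (fun γ => μ γ = m), f γ
      = ∑ γ ∈ s, f γ := by
    intro f
    rw [Finset.sum_fiberwise_eq_sum_filter s T μ f,
      Finset.filter_true_of_mem (fun γ hγ => Finset.mem_image_of_mem μ hγ)]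
  have hvdm : ∀ m ∈ T, Bg m = 0 := by
    apply vandermondeB T hT0 Ag Bg
    intro n
    have step1 : ∀ m ∈ T, m ^ n * (Ag m + (n:ℂ) * Bg m)
        = ∑ γ ∈ s.filter (fun γ => μ γ = m), (μ γ)^n * (A' γ + (n:ℂ) * B' γ) := by
      intro m _
      have hcongr : ∑ γ ∈ s.filter (fun γ => μ γ = m), (μ γ)^n * (A' γ + (n:ℂ) * B' γ)
           = ∑ γ ∈ s.filter (fun γ => μ γ = m), m^n * (A' γ + (n:ℂ) * B' γ) :=
        Finset.sum_congr rfl (fun γ hγ => by rw [(Finset.mem_filter.mp hγ).2])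
      rw [hcongr]
      simp only [hAg, hBg]
      simp only [mul_add, Finset.mul_sum, Finset.sum_add_distrib]
    calc ∑ m ∈ T, m ^ n * (Ag m + (n:ℂ) * Bg m)
        = ∑ m ∈ T, ∑ γ ∈ s.filter (fun γ => μ γ = m), (μ γ)^n * (A' γ + (n:ℂ) * B' γ) :=
          Finset.sum_congr rfl step1
      _ = ∑ γ ∈ s, (μ γ)^n * (A' γ + (n:ℂ) * B' γ) := hfiber _
      _ = 0 := hkey n
  have hsum : ∑ γ ∈ s, B' γ = 0 := by
    rw [← hfiber B']
    apply Finset.sum_eq_zero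
    intro m hm
    exact hvdm m hm
  have hfinal : (2 * (Real.pi:ℂ) * Complex.I) * ∑ γ ∈ s, b γ * Fg γ z = 0 := by
    rw [Finset.mul_sum, ← hsum]
    apply Finset.sum_congr rfl
    intro γ _
    rw [hB']
    ring
  rcases mul_eq_zero.mp hfinal with h1 | h2
  · exact absurd h1 Complex.two_pi_I_ne_zero
  · exact h2

lemma FgSwap (γ : ℂ × ℂ) (z : ℂ) : Fg (Prod.swap γ) z = Fg γ (1 - z) := by
  unfold Fg
  simp only [Prod.fst_swap, Prod.snd_swap]
  rw [show (1 - (1 - z)) = z by ring, add_comm]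

lemma ball_symm {z : ℂ} (hz : z ∈ Metric.ball ((2:ℂ)⁻¹) (8⁻¹ : ℝ)) :
    (1 - z) ∈ Metric.ball ((2:ℂ)⁻¹) (8⁻¹ : ℝ) := by
  rw [Metric.mem_ball, Complex.dist_eq] at hz ⊢
  rw [show (1 - z - 2⁻¹ : ℂ) = -(z - 2⁻¹) by ring, norm_neg]
  exact hz

/-- The functions `1`, `log z`, `log(1/(1−z))` are linearly independent over the algebra
`C = span_ℂ{ z^α (1−z)^β : α, β ∈ ℂ }` of functions on `Ω`. -/
theorem stmt16
    (P₁ P₂ P₃ : Omega → ℂ)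
    (h₁ : P₁ ∈ Submodule.span ℂ (Set.range fun p : ℂ × ℂ => fPow p.1 p.2))
    (h₂ : P₂ ∈ Submodule.span ℂ (Set.range fun p : ℂ × ℂ => fPow p.1 p.2))
    (h₃ : P₃ ∈ Submodule.span ℂ (Set.range fun p : ℂ × ℂ => fPow p.1 p.2))
    (h : ∀ z : Omega, P₁ z + P₂ z * Complex.log (z : ℂ)
        + P₃ z * Complex.log (1 / (1 - (z : ℂ))) = 0) :
    P₁ = 0 ∧ P₂ = 0 ∧ P₃ = 0 := by
  classical
  obtain ⟨c₁, hc₁⟩ := Finsupp.mem_span_range_iff_exists_finsupp.mp h₁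
  obtain ⟨c₂, hc₂⟩ := Finsupp.mem_span_range_iff_exists_finsupp.mp h₂
  obtain ⟨c₃, hc₃⟩ := Finsupp.mem_span_range_iff_exists_finsupp.mp h₃
  set s : Finset (ℂ × ℂ) := (c₁.support ∪ c₂.support) ∪ c₃.support with hs
  have hrep : ∀ (cf : (ℂ × ℂ) →₀ ℂ) (P : Omega → ℂ),
      (cf.sum fun i t => t • fPow i.1 i.2) = P → cf.support ⊆ s →
      ∀ z : Omega, P z = ∑ γ ∈ s, cf γ * Fg γ (z : ℂ) := by
    intro cf P hP hsub z
    rw [← hP]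
    rw [Finsupp.sum]
    rw [Finset.sum_apply]
    apply Finset.sum_subset hsub
    · intro γ _ hns
      rw [Finsupp.notMem_support_iff.mp hns]
      simp
  have hsub1 : c₁.support ⊆ s := by
    intro x hx; rw [hs]; exact Finset.mem_union_left _ (Finset.mem_union_left _ hx)
  have hsub2 : c₂.support ⊆ s := by
    intro x hx; rw [hs]; exact Finset.mem_union_left _ (Finset.mem_union_right _ hx)
  have hP1 : ∀ z : Omega, P₁ z = ∑ γ ∈ s, c₁ γ * Fg γ (z : ℂ) := hrep c₁ P₁ hc₁ hsub1
  have hP2 : ∀ z : Omega, P₂ z = ∑ γ ∈ s, c₂ γ * Fg γ (z : ℂ) := hrep c₂ P₂ hc₂ hsub2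
  have hP3 : ∀ z : Omega, P₃ z = ∑ γ ∈ s, c₃ γ * Fg γ (z : ℂ) :=
    hrep c₃ P₃ hc₃ Finset.subset_union_right
  have hrelΩ : ∀ z : Omega, ∑ γ ∈ s, Fg γ (z : ℂ) *
      (c₁ γ + c₂ γ * Complex.log (z : ℂ) - c₃ γ * Complex.log (1 - (z : ℂ))) = 0 := by
    intro z
    have hlog : Complex.log (1 / (1 - (z:ℂ))) = - Complex.log (1 - (z:ℂ)) := by
      rw [one_div]
      exact Complex.log_inv _ (Complex.slitPlane_arg_ne_pi (slit_of_mem_Omega' z.2))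
    calc ∑ γ ∈ s, Fg γ (z : ℂ) *
          (c₁ γ + c₂ γ * Complex.log (z : ℂ) - c₃ γ * Complex.log (1 - (z : ℂ)))
        = P₁ z + P₂ z * Complex.log (z : ℂ) + P₃ z * Complex.log (1 / (1 - (z : ℂ))) := by
          rw [hP1 z, hP2 z, hP3 z, hlog, Finset.sum_mul, Finset.sum_mul,
            ← Finset.sum_add_distrib, ← Finset.sum_add_distrib]
          apply Finset.sum_congr rfl
          intro γ _
          ring
      _ = 0 := h z
  have hrelball : ∀ z ∈ Metric.ball ((2:ℂ)⁻¹) (8⁻¹ : ℝ),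
      ∑ γ ∈ s, Fg γ z * (c₁ γ + c₂ γ * Complex.log z - c₃ γ * Complex.log (1 - z)) = 0 :=
    fun z hz => hrelΩ ⟨z, ball_subset_Omega hz⟩
  have hb : ∀ z ∈ Metric.ball ((2:ℂ)⁻¹) (8⁻¹ : ℝ), ∑ γ ∈ s, c₂ γ * Fg γ z = 0 :=
    split s c₁ c₂ c₃ hrelball
  -- swapped relation for the third coefficient
  set s' : Finset (ℂ × ℂ) := s.image Prod.swap with hs'
  have hrelball' : ∀ z ∈ Metric.ball ((2:ℂ)⁻¹) (8⁻¹ : ℝ),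
      ∑ γ ∈ s', Fg γ z * ((fun γ => c₁ (Prod.swap γ)) γ
        + (fun γ => -c₃ (Prod.swap γ)) γ * Complex.log z
        - (fun γ => -c₂ (Prod.swap γ)) γ * Complex.log (1 - z)) = 0 := by
    intro z hz
    rw [hs', Finset.sum_image (fun x _ y _ hxy => Prod.swap_injective hxy)]
    calc ∑ γ ∈ s, Fg (Prod.swap γ) z * (c₁ (Prod.swap (Prod.swap γ))
            + -c₃ (Prod.swap (Prod.swap γ)) * Complex.log z
            - -c₂ (Prod.swap (Prod.swap γ)) * Complex.log (1 - z))
        = ∑ γ ∈ s, Fg γ (1 - z) * (c₁ γ + c₂ γ * Complex.log (1 - z)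
            - c₃ γ * Complex.log (1 - (1 - z))) := by
          apply Finset.sum_congr rfl
          intro γ _
          rw [FgSwap, Prod.swap_swap, show (1 - (1 - z)) = z by ring]
          ring
      _ = 0 := hrelball (1 - z) (ball_symm hz)
  have hc' := split s' _ _ _ hrelball'
  have hc : ∀ z ∈ Metric.ball ((2:ℂ)⁻¹) (8⁻¹ : ℝ), ∑ γ ∈ s, c₃ γ * Fg γ z = 0 := by
    intro z hz
    have h2 := hc' (1 - z) (ball_symm hz)
    rw [hs', Finset.sum_image (fun x _ y _ hxy => Prod.swap_injective hxy)] at h2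
    have h3 : ∑ γ ∈ s, -(c₃ γ * Fg γ z) = 0 := by
      rw [← h2]
      apply Finset.sum_congr rfl
      intro γ _
      rw [Prod.swap_swap, FgSwap, show (1 - (1 - z)) = z by ring]
      ring
    rw [Finset.sum_neg_distrib, neg_eq_zero] at h3
    exact h3
  -- globalization by the identity theorem on Ω
  have hdiff : ∀ (cf : ℂ × ℂ → ℂ),
      DifferentiableOn ℂ (fun z => ∑ γ ∈ s, cf γ * Fg γ z) Omega := by
    intro cf z hz
    apply DifferentiableAt.differentiableWithinAt
    apply DifferentiableAt.fun_sum
    intro γ _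
    apply DifferentiableAt.const_mul
    apply DifferentiableAt.cexp
    apply DifferentiableAt.add
    · exact (Complex.differentiableAt_log (slit_of_mem_Omega hz)).const_mul _
    · exact ((Complex.differentiableAt_log (slit_of_mem_Omega' hz)).comp z
        ((differentiableAt_const (1:ℂ)).sub differentiableAt_fun_id)).const_mul _
  have hglob : ∀ (cf : ℂ × ℂ → ℂ),
      (∀ z ∈ Metric.ball ((2:ℂ)⁻¹) (8⁻¹ : ℝ), ∑ γ ∈ s, cf γ * Fg γ z = 0) →
      ∀ z ∈ Omega, ∑ γ ∈ s, cf γ * Fg γ z = 0 := by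
    intro cf hball z hz
    have hcen : ((2:ℂ)⁻¹) ∈ Metric.ball ((2:ℂ)⁻¹) (8⁻¹ : ℝ) :=
      Metric.mem_ball_self (by norm_num)
    exact ((hdiff cf).analyticOnNhd isOpen_Omega).eqOn_zero_of_preconnected_of_eventuallyEq_zero
      preconnected_Omega (ball_subset_Omega hcen)
      (Filter.eventuallyEq_of_mem (Metric.isOpen_ball.mem_nhds hcen)
        (fun u hu => hball u hu)) hz
  have hP2zero : P₂ = 0 := by
    funext z
    rw [hP2 z]
    exact hglob c₂ hb (z : ℂ) z.2
  have hP3zero : P₃ = 0 := by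
    funext z
    rw [hP3 z]
    exact hglob c₃ hc (z : ℂ) z.2
  have hP1zero : P₁ = 0 := by
    funext z
    have h2 : P₂ z = 0 := by rw [hP2zero]; rfl
    have h3 : P₃ z = 0 := by rw [hP3zero]; rfl
    have hz := h z
    rw [h2, h3] at hz
    simpa using hz
  exact ⟨hP1zero, hP2zero, hP3zero⟩
end
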